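/- arXiv:2111.01010 — 4 statements merged into one kernel-verified Lean document; each statement's English description precedes it below -/
import Mathlib

section
/- For every d with 2 ≤ d < ∞, the code C_{(2,2,d)} has an open convex realization in ℝ^2. -/
/-! The sets `α_i` are `⋂_{k ≠ i} H_k`, where `H_k` is the open half-plane above the tangent to
the parabola `y = x ^ 2` at `x = k`; hence two of them meet only where all of them do, and the
point `(i, i ^ 2)` of the parabola lies in `α_i` alone. The set `β_j` is the part of the strip
`|x - j| < 1` below the tangent at `j`, and `γ_j` is its middle half `|x - j| < 1 / 2` (both are
cut to `-1 / 2 < x < d - 1 / 2`). As the tangent at `k` is `y = x ^ 2 - (x - k) ^ 2`, membership in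
each set compares the depth `x ^ 2 - y` of a point below the parabola with the squared distances
`(x - k) ^ 2`: points of `β_j` miss `H_j`, so they meet no `α_i` with `i ≠ j`, and a point of `β_j`
away from the middle half of its strip is nearer to a neighbour `k` of `j`, hence in `β_k`. -/

open Set

noncomputable section

/-- Euclidean space `ℝ^d`. -/
abbrev Euc (d : ℕ) : Type := EuclideanSpace ℝ (Fin d)

/-- The code of a collection of sets `U = (U 0, …, U (n-1))` in `ℝ^d`. -/
def codeOf {n d : ℕ} (U : Fin n → Set (Euc d)) : Set (Finset (Fin n)) :=
  {σ | ∃ p : Euc d, ∀ i : Fin n, p ∈ U i ↔ i ∈ σ}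

/-- `U` is an open convex realization of the code `C`. -/
def IsOpenReal {n d : ℕ} (C : Set (Finset (Fin n))) (U : Fin n → Set (Euc d)) : Prop :=
  (∀ i, Convex ℝ (U i)) ∧ (∀ i, IsOpen (U i)) ∧ codeOf U = C

/-- `X` is a closed convex realization of the code `C`. -/
def IsClosedReal {n d : ℕ} (C : Set (Finset (Fin n))) (X : Fin n → Set (Euc d)) : Prop :=
  (∀ i, Convex ℝ (X i)) ∧ (∀ i, IsClosed (X i)) ∧ codeOf X = C

/-- `C` has an open convex realization in `ℝ^d`. -/
def HasOpenReal {n : ℕ} (C : Set (Finset (Fin n))) (d : ℕ) : Prop :=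
  ∃ U : Fin n → Set (Euc d), IsOpenReal C U

/-- `C` has a closed convex realization in `ℝ^d`. -/
def HasClosedReal {n : ℕ} (C : Set (Finset (Fin n))) (d : ℕ) : Prop :=
  ∃ X : Fin n → Set (Euc d), IsClosedReal C X

/-- `U` is a non-degenerate open convex realization of `C`: it is an open convex
realization and the closures of its sets realize the same code. -/
def IsNondegOpenReal {n d : ℕ} (C : Set (Finset (Fin n))) (U : Fin n → Set (Euc d)) : Prop :=
  IsOpenReal C U ∧ codeOf (fun i => closure (U i)) = C

/-- `X` is a non-degenerate closed convex realization of `C`: it is a closed convex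
realization and the interiors of its sets realize the same code. -/
def IsNondegClosedReal {n d : ℕ} (C : Set (Finset (Fin n))) (X : Fin n → Set (Euc d)) : Prop :=
  IsClosedReal C X ∧ codeOf (fun i => interior (X i)) = C

/-- `C` has a non-degenerate (open or closed) convex realization in `ℝ^d`. -/
def HasNondegReal {n : ℕ} (C : Set (Finset (Fin n))) (d : ℕ) : Prop :=
  (∃ U : Fin n → Set (Euc d), IsNondegOpenReal C U) ∨
  (∃ X : Fin n → Set (Euc d), IsNondegClosedReal C X)

/-- Open embedding dimension (`⊤` if no open convex realization exists). -/
def odim {n : ℕ} (C : Set (Finset (Fin n))) : ℕ∞ :=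
  sInf {e : ℕ∞ | ∃ d : ℕ, e = d ∧ HasOpenReal C d}

/-- Closed embedding dimension (`⊤` if no closed convex realization exists). -/
def cdim {n : ℕ} (C : Set (Finset (Fin n))) : ℕ∞ :=
  sInf {e : ℕ∞ | ∃ d : ℕ, e = d ∧ HasClosedReal C d}

/-- Non-degenerate embedding dimension (`⊤` if no non-degenerate realization exists). -/
def nddim {n : ℕ} (C : Set (Finset (Fin n))) : ℕ∞ :=
  sInf {e : ℕ∞ | ∃ d : ℕ, e = d ∧ HasNondegReal C d}

/-- Index of `α_i` in the base set of `C_{(2,2,d)}`. -/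
def jdxA (d : ℕ) (i : Fin d) : Fin (3 * d) := ⟨i.1, by have := i.2; omega⟩
/-- Index of `β_i` in the base set of `C_{(2,2,d)}`. -/
def jdxB (d : ℕ) (i : Fin d) : Fin (3 * d) := ⟨d + i.1, by have := i.2; omega⟩
/-- Index of `γ_i` in the base set of `C_{(2,2,d)}`. -/
def jdxC (d : ℕ) (i : Fin d) : Fin (3 * d) := ⟨2 * d + i.1, by have := i.2; omega⟩

/-- The code `C_{(2,2,d)}` on the `3d` neurons `α_1,…,α_d,β_1,…,β_d,γ_1,…,γ_d`. -/
def code22d (d : ℕ) : Set (Finset (Fin (3 * d))) :=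
  {σ | σ = ∅ ∨
    (∃ i : Fin d, σ = {jdxB d i, jdxC d i}) ∨
    (∃ i j : Fin d, (j : ℕ) = (i : ℕ) + 1 ∧ σ = {jdxB d i, jdxB d j, jdxC d i}) ∨
    (∃ i j : Fin d, (j : ℕ) = (i : ℕ) + 1 ∧ σ = {jdxB d i, jdxB d j}) ∨
    (∃ i j : Fin d, (j : ℕ) = (i : ℕ) + 1 ∧ σ = {jdxB d i, jdxB d j, jdxC d j}) ∨
    (∃ i : Fin d, σ = {jdxA d i, jdxB d i, jdxC d i}) ∨
    (∃ i : Fin d, σ = {jdxA d i}) ∨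
    σ = Finset.univ.image (jdxA d)}

lemma codeOf_eq_range {n d : ℕ} {U : Fin n → Set (Euc d)} {f : Euc d → Finset (Fin n)}
    (hf : ∀ p m, p ∈ U m ↔ m ∈ f p) : codeOf U = Set.range f := by
  ext σ
  constructor
  · rintro ⟨p, hp⟩
    exact ⟨p, Finset.ext fun m => (hf p m).symm.trans (hp m)⟩
  · rintro ⟨p, rfl⟩
    exact ⟨p, hf p⟩

namespace Code22d

def halfPlane (a b c : ℝ) : Set (Euc 2) := {p | a * p 0 + b * p 1 < c}

lemma convex_halfPlane (a b c : ℝ) : Convex ℝ (halfPlane a b c) :=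
  convex_halfSpace_lt ⟨fun p q => by simp only [PiLp.add_apply]; ring,
    fun r p => by simp only [PiLp.smul_apply, smul_eq_mul]; ring⟩ c

lemma isOpen_halfPlane (a b c : ℝ) : IsOpen (halfPlane a b c) :=
  isOpen_lt (by fun_prop) continuous_const

/-- The open half-plane above the tangent `y = 2 t x - t ^ 2` to the parabola `y = x ^ 2`. -/
def above (t : ℝ) : Set (Euc 2) := halfPlane (2 * t) (-1) (t ^ 2)

def below (t : ℝ) : Set (Euc 2) := halfPlane (-2 * t) 1 (-t ^ 2)

def strip (l r : ℝ) : Set (Euc 2) := halfPlane (-1) 0 (-l) ∩ halfPlane 1 0 r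

lemma mem_above {t : ℝ} {p : Euc 2} : p ∈ above t ↔ p 0 ^ 2 - p 1 < (p 0 - t) ^ 2 := by
  simp only [above, halfPlane, Set.mem_ofPred_eq]
  constructor <;> intro h <;> nlinarith

lemma mem_below {t : ℝ} {p : Euc 2} : p ∈ below t ↔ (p 0 - t) ^ 2 < p 0 ^ 2 - p 1 := by
  simp only [below, halfPlane, Set.mem_ofPred_eq]
  constructor <;> intro h <;> nlinarith

lemma mem_strip {l r : ℝ} {p : Euc 2} : p ∈ strip l r ↔ l < p 0 ∧ p 0 < r := by
  simp only [strip, halfPlane, Set.mem_inter_iff, Set.mem_ofPred_eq]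
  constructor <;> rintro ⟨h, h'⟩ <;> constructor <;> linarith

lemma notMem_above_of_mem_below {t : ℝ} {p : Euc 2} (h : p ∈ below t) : p ∉ above t := by
  rw [mem_below] at h
  rw [mem_above]
  exact h.le.not_gt

lemma convex_strip (l r : ℝ) : Convex ℝ (strip l r) :=
  (convex_halfPlane _ _ _).inter (convex_halfPlane _ _ _)

lemma isOpen_strip (l r : ℝ) : IsOpen (strip l r) :=
  (isOpen_halfPlane _ _ _).inter (isOpen_halfPlane _ _ _)

variable {d : ℕ}

def aSet (i : Fin d) : Set (Euc 2) := ⋂ (k : Fin d) (_ : k ≠ i), above k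

def bSet (j : Fin d) : Set (Euc 2) :=
  below j ∩ strip ((j : ℕ) - 1) ((j : ℕ) + 1) ∩ strip (-1 / 2) (d - 1 / 2)

def cSet (j : Fin d) : Set (Euc 2) := bSet j ∩ strip ((j : ℕ) - 1 / 2) ((j : ℕ) + 1 / 2)

lemma convex_aSet (i : Fin d) : Convex ℝ (aSet i) :=
  convex_iInter₂ fun _ _ => convex_halfPlane _ _ _

lemma convex_bSet (j : Fin d) : Convex ℝ (bSet j) :=
  ((convex_halfPlane _ _ _).inter (convex_strip _ _)).inter (convex_strip _ _)

lemma convex_cSet (j : Fin d) : Convex ℝ (cSet j) := (convex_bSet j).inter (convex_strip _ _)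

lemma isOpen_aSet (i : Fin d) : IsOpen (aSet i) :=
  isOpen_iInter_of_finite fun _ => isOpen_iInter_of_finite fun _ => isOpen_halfPlane _ _ _

lemma isOpen_bSet (j : Fin d) : IsOpen (bSet j) :=
  ((isOpen_halfPlane _ _ _).inter (isOpen_strip _ _)).inter (isOpen_strip _ _)

lemma isOpen_cSet (j : Fin d) : IsOpen (cSet j) := (isOpen_bSet j).inter (isOpen_strip _ _)

lemma mem_aSet {i : Fin d} {p : Euc 2} : p ∈ aSet i ↔ ∀ k, k ≠ i → p ∈ above (k : ℕ) := by
  simp [aSet]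

lemma mem_bSet {j : Fin d} {p : Euc 2} :
    p ∈ bSet j ↔ (p 0 - (j : ℕ)) ^ 2 < p 0 ^ 2 - p 1 ∧ |p 0 - (j : ℕ)| < 1 ∧
      -1 / 2 < p 0 ∧ p 0 < d - 1 / 2 := by
  simp only [bSet, Set.mem_inter_iff, mem_below, mem_strip, abs_lt]
  constructor
  · rintro ⟨⟨h, h1, h2⟩, h3, h4⟩; exact ⟨h, ⟨by linarith, by linarith⟩, h3, h4⟩
  · rintro ⟨h, ⟨h1, h2⟩, h3, h4⟩; exact ⟨⟨h, by linarith, by linarith⟩, h3, h4⟩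

lemma mem_cSet {j : Fin d} {p : Euc 2} : p ∈ cSet j ↔ p ∈ bSet j ∧ |p 0 - (j : ℕ)| < 1 / 2 := by
  simp only [cSet, Set.mem_inter_iff, mem_strip, abs_lt]
  constructor
  · rintro ⟨h, h1, h2⟩; exact ⟨h, by linarith, by linarith⟩
  · rintro ⟨h, h1, h2⟩; exact ⟨h, by linarith, by linarith⟩

lemma le_succ_of_mem_bSet {j k : Fin d} {p : Euc 2} (hj : p ∈ bSet j) (hk : p ∈ bSet k) :
    (j : ℕ) ≤ k + 1 := by
  have hj := (abs_lt.mp (mem_bSet.mp hj).2.1)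
  have hk := (abs_lt.mp (mem_bSet.mp hk).2.1)
  have : (j : ℕ) < (k : ℕ) + 2 := by exact_mod_cast (show ((j : ℕ) : ℝ) < (k : ℕ) + 2 by linarith)
  omega

lemma natCast_eq_of_abs_sub_lt_one {i k : ℕ} (h : |(i : ℝ) - k| < 1) : i = k := by
  obtain ⟨h₁, h₂⟩ := abs_lt.mp h
  have : i < k + 1 := by exact_mod_cast (show (i : ℝ) < k + 1 by linarith)
  have : k < i + 1 := by exact_mod_cast (show (k : ℝ) < i + 1 by linarith)
  omega

lemma eq_of_mem_cSet {j k : Fin d} {p : Euc 2} (hj : p ∈ cSet j) (hk : p ∈ cSet k) : j = k := by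
  have hj := abs_lt.mp (mem_cSet.mp hj).2
  have hk := abs_lt.mp (mem_cSet.mp hk).2
  exact Fin.ext (natCast_eq_of_abs_sub_lt_one (abs_lt.mpr ⟨by linarith, by linarith⟩))

lemma mem_cSet_or_exists_adjacent_mem_bSet {j : Fin d} {p : Euc 2} (h : p ∈ bSet j) :
    p ∈ cSet j ∨ ∃ k : Fin d, ((k : ℕ) = j + 1 ∨ (j : ℕ) = k + 1) ∧ p ∈ bSet k := by
  obtain ⟨hbelow, hstrip, hleft, hright⟩ := mem_bSet.mp h
  obtain ⟨hstrip₁, hstrip₂⟩ := abs_lt.mp hstrip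
  by_cases hmid : |p 0 - (j : ℕ)| < 1 / 2
  · exact Or.inl (mem_cSet.mpr ⟨h, hmid⟩)
  right
  rcases le_or_gt ((j : ℕ) + 1 / 2 : ℝ) (p 0) with hx | hx
  · have hk : (j : ℕ) + 1 < d := by
      exact_mod_cast (show ((j : ℕ) : ℝ) + 1 < d by linarith)
    refine ⟨⟨j + 1, hk⟩, Or.inl rfl, mem_bSet.mpr ⟨?_, ?_, hleft, hright⟩⟩ <;> push_cast
    · nlinarith
    · rw [abs_lt]; constructor <;> linarith
  · have hx' : p 0 ≤ (j : ℕ) - 1 / 2 := by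
      by_contra hx'
      exact hmid (abs_lt.mpr ⟨by linarith, by linarith⟩)
    have hk : 0 < (j : ℕ) := by
      exact_mod_cast (show (0 : ℝ) < (j : ℕ) by linarith)
    refine ⟨⟨j - 1, by omega⟩, Or.inr (by dsimp only; omega),
      mem_bSet.mpr ⟨?_, ?_, hleft, hright⟩⟩ <;> push_cast [Nat.cast_sub hk]
    · nlinarith
    · rw [abs_lt]; constructor <;> linarith

lemma mem_above_of_mem_aSet {i k : Fin d} {p : Euc 2} (h : p ∈ aSet i) (hk : k ≠ i) :
    p ∈ above (k : ℕ) :=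
  mem_aSet.mp h k hk

lemma notMem_aSet_of_mem_bSet {j k : Fin d} {p : Euc 2} (h : p ∈ bSet j) (hk : k ≠ j) :
    p ∉ aSet k := fun hA =>
  notMem_above_of_mem_below h.1.1 (mem_above_of_mem_aSet hA hk.symm)

lemma mem_aSet_of_mem_aSet_of_ne {i k : Fin d} {p : Euc 2} (hi : p ∈ aSet i) (hk : p ∈ aSet k)
    (hik : i ≠ k) (l : Fin d) : p ∈ aSet l := by
  refine mem_aSet.mpr fun m _ => ?_
  by_cases hm : m = i
  · exact mem_above_of_mem_aSet hk (hm ▸ hik)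
  · exact mem_above_of_mem_aSet hi hm

/-- `code22d d`, each codeword split into its sets of `α`-, `β`- and `γ`-indices. -/
def codeTriples (d : ℕ) : Set (Finset (Fin d) × Finset (Fin d) × Finset (Fin d)) :=
  {t | t = (∅, ∅, ∅) ∨ (∃ i, t = (∅, {i}, {i})) ∨
    (∃ i j : Fin d, (j : ℕ) = i + 1 ∧ t = (∅, {i, j}, {i})) ∨
    (∃ i j : Fin d, (j : ℕ) = i + 1 ∧ t = (∅, {i, j}, ∅)) ∨
    (∃ i j : Fin d, (j : ℕ) = i + 1 ∧ t = (∅, {i, j}, {j})) ∨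
    (∃ i, t = ({i}, {i}, {i})) ∨ (∃ i, t = ({i}, ∅, ∅)) ∨ t = (Finset.univ, ∅, ∅)}

def encode (t : Finset (Fin d) × Finset (Fin d) × Finset (Fin d)) : Finset (Fin (3 * d)) :=
  t.1.image (jdxA d) ∪ t.2.1.image (jdxB d) ∪ t.2.2.image (jdxC d)

lemma code22d_eq_image_encode : code22d d = encode '' codeTriples d := by
  ext σ
  simp only [code22d, codeTriples, encode, Set.mem_image, Set.mem_ofPred_eq, or_and_right,
    exists_or]
  simp [Finset.insert_union, eq_comm]

variable (d) in
def realization (m : Fin (3 * d)) : Set (Euc 2) :=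
  if h : (m : ℕ) < d then aSet ⟨m, h⟩
  else if h' : (m : ℕ) < 2 * d then bSet (⟨m - d, by omega⟩ : Fin d)
  else cSet (⟨m - 2 * d, by have := m.2; omega⟩ : Fin d)

lemma exists_eq_jdx (m : Fin (3 * d)) :
    (∃ i, m = jdxA d i) ∨ (∃ i, m = jdxB d i) ∨ ∃ i, m = jdxC d i := by
  have := m.2
  by_cases h : (m : ℕ) < d
  · exact Or.inl ⟨⟨m, h⟩, rfl⟩
  by_cases h' : (m : ℕ) < 2 * d
  · exact Or.inr (Or.inl ⟨(⟨m - d, by omega⟩ : Fin d), Fin.ext (by simp only [jdxB]; omega)⟩)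
  · exact Or.inr (Or.inr ⟨(⟨m - 2 * d, by omega⟩ : Fin d), Fin.ext (by simp only [jdxC]; omega)⟩)

lemma realization_jdxA (i : Fin d) : realization d (jdxA d i) = aSet i := by
  simp [realization, jdxA]

lemma realization_jdxB (i : Fin d) : realization d (jdxB d i) = bSet i := by
  have := i.2
  simp [realization, jdxB, show d + (i : ℕ) < 2 * d by omega]

lemma realization_jdxC (i : Fin d) : realization d (jdxC d i) = cSet i := by
  simp [realization, jdxC, show ¬ 2 * d + (i : ℕ) < d by omega]

lemma jdxA_mem_encode {i : Fin d} {t : Finset (Fin d) × Finset (Fin d) × Finset (Fin d)} :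
    jdxA d i ∈ encode t ↔ i ∈ t.1 := by
  simp only [encode, Finset.mem_union, Finset.mem_image, jdxA, jdxB, jdxC, Fin.ext_iff]
  constructor
  · rintro ((⟨a, ha, h⟩ | ⟨a, ha, h⟩) | ⟨a, ha, h⟩)
    · rwa [← Fin.ext h]
    all_goals omega
  · exact fun h => Or.inl (Or.inl ⟨i, h, rfl⟩)

lemma jdxB_mem_encode {i : Fin d} {t : Finset (Fin d) × Finset (Fin d) × Finset (Fin d)} :
    jdxB d i ∈ encode t ↔ i ∈ t.2.1 := by
  simp only [encode, Finset.mem_union, Finset.mem_image, jdxA, jdxB, jdxC, Fin.ext_iff]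
  constructor
  · rintro ((⟨a, ha, h⟩ | ⟨a, ha, h⟩) | ⟨a, ha, h⟩)
    · omega
    · rwa [← Fin.ext (by omega : (a : ℕ) = i)]
    · omega
  · exact fun h => Or.inl (Or.inr ⟨i, h, rfl⟩)

lemma jdxC_mem_encode {i : Fin d} {t : Finset (Fin d) × Finset (Fin d) × Finset (Fin d)} :
    jdxC d i ∈ encode t ↔ i ∈ t.2.2 := by
  simp only [encode, Finset.mem_union, Finset.mem_image, jdxA, jdxB, jdxC, Fin.ext_iff]
  constructor
  · rintro ((⟨a, ha, h⟩ | ⟨a, ha, h⟩) | ⟨a, ha, h⟩)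
    iterate 2 omega
    · rwa [← Fin.ext (by omega : (a : ℕ) = i)]
  · exact fun h => Or.inr ⟨i, h, rfl⟩

variable (d) in
open Classical in
def trace (p : Euc 2) : Finset (Fin d) × Finset (Fin d) × Finset (Fin d) :=
  (.filter (p ∈ aSet ·) .univ, .filter (p ∈ bSet ·) .univ, .filter (p ∈ cSet ·) .univ)

lemma mem_realization_iff (p : Euc 2) (m : Fin (3 * d)) :
    p ∈ realization d m ↔ m ∈ encode (trace d p) := by
  rcases exists_eq_jdx m with ⟨i, rfl⟩ | ⟨i, rfl⟩ | ⟨i, rfl⟩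
  · simp [realization_jdxA, jdxA_mem_encode, trace]
  · simp [realization_jdxB, jdxB_mem_encode, trace]
  · simp [realization_jdxC, jdxC_mem_encode, trace]

lemma eq_empty_or_singleton_or_pair {s : Finset (Fin d)} (h : ∀ j ∈ s, ∀ k ∈ s, (j : ℕ) ≤ k + 1) :
    s = ∅ ∨ (∃ j, s = {j}) ∨ ∃ i j : Fin d, (j : ℕ) = i + 1 ∧ s = {i, j} := by
  by_cases hpair : ∃ i ∈ s, ∃ j ∈ s, (j : ℕ) = i + 1
  · obtain ⟨i, hi, j, hj, hij⟩ := hpair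
    refine Or.inr (Or.inr ⟨i, j, hij, Finset.ext fun k => ⟨fun hk => ?_, fun hk => ?_⟩⟩)
    · have := h k hk i hi
      have := h j hj k hk
      simp only [Finset.mem_insert, Finset.mem_singleton, Fin.ext_iff]
      omega
    · rcases Finset.mem_insert.mp hk with rfl | hk
      · exact hi
      · rwa [Finset.mem_singleton.mp hk]
  · push Not at hpair
    rcases s.eq_empty_or_nonempty with hs | ⟨j, hj⟩
    · exact Or.inl hs
    refine Or.inr (Or.inl ⟨j, Finset.eq_singleton_iff_unique_mem.mpr ⟨hj, fun k hk => ?_⟩⟩)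
    have := h j hj k hk
    have := h k hk j hj
    have := hpair j hj k hk
    have := hpair k hk j hj
    exact Fin.ext (by omega)

section trace

variable {p : Euc 2}

lemma mem_trace_fst {i : Fin d} : i ∈ (trace d p).1 ↔ p ∈ aSet i := by simp [trace]

lemma mem_trace_snd_fst {j : Fin d} : j ∈ (trace d p).2.1 ↔ p ∈ bSet j := by simp [trace]

lemma mem_trace_snd_snd {j : Fin d} : j ∈ (trace d p).2.2 ↔ p ∈ cSet j := by simp [trace]

lemma trace_mem_of_snd_eq_empty (hb : (trace d p).2.1 = ∅) : trace d p ∈ codeTriples d := by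
  have hc : (trace d p).2.2 = ∅ := Finset.eq_empty_of_forall_notMem fun j hj => by
    simpa [hb] using mem_trace_snd_fst.mpr (mem_cSet.mp (mem_trace_snd_snd.mp hj)).1
  by_cases hpair : ∃ i ∈ (trace d p).1, ∃ k ∈ (trace d p).1, i ≠ k
  · obtain ⟨i, hi, k, hk, hik⟩ := hpair
    have ha : (trace d p).1 = Finset.univ := Finset.eq_univ_of_forall fun l => mem_trace_fst.mpr
      (mem_aSet_of_mem_aSet_of_ne (mem_trace_fst.mp hi) (mem_trace_fst.mp hk) hik l)
    exact Or.inr <| Or.inr <| Or.inr <| Or.inr <| Or.inr <| Or.inr <| Or.inr <|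
      Prod.ext ha (Prod.ext hb hc)
  push Not at hpair
  rcases (trace d p).1.eq_empty_or_nonempty with ha | ⟨i, hi⟩
  · exact Or.inl (Prod.ext ha (Prod.ext hb hc))
  · have ha := Finset.eq_singleton_iff_unique_mem.mpr ⟨hi, fun k hk => hpair k hk i hi⟩
    exact Or.inr <| Or.inr <| Or.inr <| Or.inr <| Or.inr <| Or.inr <| Or.inl
      ⟨i, Prod.ext ha (Prod.ext hb hc)⟩

lemma trace_mem_of_snd_eq_singleton {j : Fin d} (hb : (trace d p).2.1 = {j}) :
    trace d p ∈ codeTriples d := by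
  have hB : p ∈ bSet j := mem_trace_snd_fst.mp (hb ▸ Finset.mem_singleton_self j)
  have hC : p ∈ cSet j := by
    refine (mem_cSet_or_exists_adjacent_mem_bSet hB).resolve_right ?_
    rintro ⟨k, hk, hBk⟩
    have : k = j := Finset.mem_singleton.mp (hb ▸ mem_trace_snd_fst.mpr hBk)
    subst this
    omega
  have hc : (trace d p).2.2 = {j} := Finset.eq_singleton_iff_unique_mem.mpr
    ⟨mem_trace_snd_snd.mpr hC, fun k hk => eq_of_mem_cSet (mem_trace_snd_snd.mp hk) hC⟩
  have ha : (trace d p).1 ⊆ {j} := fun i hi => Finset.mem_singleton.mpr <|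
    by_contra fun hij => notMem_aSet_of_mem_bSet hB hij (mem_trace_fst.mp hi)
  rcases Finset.subset_singleton_iff.mp ha with ha | ha
  · exact Or.inr (Or.inl ⟨j, Prod.ext ha (Prod.ext hb hc)⟩)
  · exact Or.inr <| Or.inr <| Or.inr <| Or.inr <| Or.inr <| Or.inl
      ⟨j, Prod.ext ha (Prod.ext hb hc)⟩

lemma trace_mem_of_snd_eq_pair {i j : Fin d} (hij : (j : ℕ) = i + 1)
    (hb : (trace d p).2.1 = {i, j}) : trace d p ∈ codeTriples d := by
  have hBi : p ∈ bSet i := mem_trace_snd_fst.mp (by simp [hb])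
  have hBj : p ∈ bSet j := mem_trace_snd_fst.mp (by simp [hb])
  have ha : (trace d p).1 = ∅ := Finset.eq_empty_of_forall_notMem fun k hk => by
    rcases eq_or_ne k i with rfl | hki
    · exact notMem_aSet_of_mem_bSet hBj (fun h => by subst h; omega) (mem_trace_fst.mp hk)
    · exact notMem_aSet_of_mem_bSet hBi hki (mem_trace_fst.mp hk)
  rcases (trace d p).2.2.eq_empty_or_nonempty with hc | ⟨k, hk⟩
  · exact Or.inr <| Or.inr <| Or.inr <| Or.inl ⟨i, j, hij, Prod.ext ha (Prod.ext hb hc)⟩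
  have hc := Finset.eq_singleton_iff_unique_mem.mpr
    ⟨hk, fun l hl => eq_of_mem_cSet (mem_trace_snd_snd.mp hl) (mem_trace_snd_snd.mp hk)⟩
  have hkB : k ∈ (trace d p).2.1 := mem_trace_snd_fst.mpr (mem_cSet.mp (mem_trace_snd_snd.mp hk)).1
  rcases Finset.mem_insert.mp (hb ▸ hkB) with rfl | hkj
  · exact Or.inr <| Or.inr <| Or.inl ⟨k, j, hij, Prod.ext ha (Prod.ext hb hc)⟩
  · rw [Finset.mem_singleton.mp hkj] at hc
    exact Or.inr <| Or.inr <| Or.inr <| Or.inr <| Or.inl ⟨i, j, hij, Prod.ext ha (Prod.ext hb hc)⟩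

lemma trace_mem_codeTriples (p : Euc 2) : trace d p ∈ codeTriples d := by
  have hadj : ∀ j ∈ (trace d p).2.1, ∀ k ∈ (trace d p).2.1, (j : ℕ) ≤ k + 1 := fun j hj k hk =>
    le_succ_of_mem_bSet (mem_trace_snd_fst.mp hj) (mem_trace_snd_fst.mp hk)
  rcases eq_empty_or_singleton_or_pair hadj with hb | ⟨j, hb⟩ | ⟨i, j, hij, hb⟩
  · exact trace_mem_of_snd_eq_empty hb
  · exact trace_mem_of_snd_eq_singleton hb
  · exact trace_mem_of_snd_eq_pair hij hb

end trace

lemma snd_snd_trace (p : Euc 2) :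
    (trace d p).2.2 = (trace d p).2.1.filter (fun k : Fin d => |p 0 - (k : ℕ)| < 1 / 2) := by
  ext k
  simp only [Finset.mem_filter, mem_trace_snd_snd, mem_trace_snd_fst, mem_cSet]

/- The witnesses of the codewords without `α` lie on the line `y = -d ^ 2`, which is below the
tangent at every `k < d` where `x ≥ 0`. -/
lemma sq_sub_lt_of_low {x : ℝ} (hx : 0 ≤ x) (k : Fin d) :
    (x - (k : ℕ)) ^ 2 < x ^ 2 - -(d : ℝ) ^ 2 := by
  have hk : ((k : ℕ) : ℝ) + 1 ≤ d := by exact_mod_cast k.2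
  have : (0 : ℝ) ≤ (k : ℕ) := Nat.cast_nonneg _
  nlinarith

lemma fst_trace_low (hd : 2 ≤ d) {x : ℝ} (hx : 0 ≤ x) :
    (trace d !₂[x, -(d : ℝ) ^ 2]).1 = ∅ := by
  have : Nontrivial (Fin d) := Fin.nontrivial_iff_two_le.mpr hd
  refine Finset.eq_empty_of_forall_notMem fun i hi => ?_
  obtain ⟨k, hk⟩ := exists_ne i
  have := mem_above.mp (mem_above_of_mem_aSet (mem_trace_fst.mp hi) hk)
  simp only [Matrix.cons_val_zero, Matrix.cons_val_one, Matrix.cons_val_fin_one] at this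
  linarith [sq_sub_lt_of_low hx k]

lemma mem_snd_fst_trace_low {x : ℝ} (hx : 0 ≤ x) {j : Fin d} :
    j ∈ (trace d !₂[x, -(d : ℝ) ^ 2]).2.1 ↔ |x - (j : ℕ)| < 1 ∧ -1 / 2 < x ∧ x < d - 1 / 2 := by
  simp only [mem_trace_snd_fst, mem_bSet, Matrix.cons_val_zero, Matrix.cons_val_one,
    Matrix.cons_val_fin_one, sq_sub_lt_of_low hx, true_and]

lemma trace_low_at_dim (hd : 2 ≤ d) : trace d !₂[(d : ℝ), -(d : ℝ) ^ 2] = (∅, ∅, ∅) := by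
  have hx : (0 : ℝ) ≤ d := Nat.cast_nonneg d
  have hb : (trace d !₂[(d : ℝ), -(d : ℝ) ^ 2]).2.1 = ∅ := Finset.eq_empty_of_forall_notMem
    fun j hj => by linarith [((mem_snd_fst_trace_low hx).mp hj).2.2]
  refine Prod.ext (fst_trace_low hd hx) (Prod.ext hb ?_)
  rw [snd_snd_trace, hb, Finset.filter_empty]

lemma trace_low_natCast (hd : 2 ≤ d) (i : Fin d) :
    trace d !₂[((i : ℕ) : ℝ), -(d : ℝ) ^ 2] = (∅, {i}, {i}) := by
  have hi : ((i : ℕ) : ℝ) + 1 ≤ d := by exact_mod_cast i.2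
  have hx : (0 : ℝ) ≤ (i : ℕ) := Nat.cast_nonneg _
  have hb : (trace d !₂[((i : ℕ) : ℝ), -(d : ℝ) ^ 2]).2.1 = {i} := by
    ext k
    rw [mem_snd_fst_trace_low hx, Finset.mem_singleton]
    constructor
    · exact fun h => (Fin.ext (natCast_eq_of_abs_sub_lt_one h.1)).symm
    · rintro rfl
      refine ⟨by simp, by linarith, by linarith⟩
  refine Prod.ext (fst_trace_low hd hx) (Prod.ext hb ?_)
  rw [snd_snd_trace, hb]
  simp

lemma snd_fst_trace_low_pair {i j : Fin d} (hij : (j : ℕ) = i + 1) {s : ℝ} (hs₀ : 0 < s)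
    (hs₁ : s < 1) : (trace d !₂[(i : ℕ) + s, -(d : ℝ) ^ 2]).2.1 = {i, j} := by
  have hi : (0 : ℝ) ≤ (i : ℕ) := Nat.cast_nonneg _
  have hj : ((i : ℕ) : ℝ) + 2 ≤ d := by exact_mod_cast (show (i : ℕ) + 2 ≤ d by omega)
  ext k
  rw [mem_snd_fst_trace_low (by linarith), abs_lt, Finset.mem_insert, Finset.mem_singleton,
    Fin.ext_iff, Fin.ext_iff, hij]
  constructor
  · rintro ⟨⟨h₁, h₂⟩, -, -⟩
    have : (k : ℕ) < i + 2 := by exact_mod_cast (show ((k : ℕ) : ℝ) < (i : ℕ) + 2 by linarith)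
    have : (i : ℕ) < k + 1 := by exact_mod_cast (show ((i : ℕ) : ℝ) < (k : ℕ) + 1 by linarith)
    omega
  · rintro (h | h) <;> rw [h] <;> push_cast <;> refine ⟨⟨?_, ?_⟩, ?_, ?_⟩ <;> linarith

lemma trace_low_pair_left (hd : 2 ≤ d) {i j : Fin d} (hij : (j : ℕ) = i + 1) :
    trace d !₂[(i : ℕ) + 1 / 4, -(d : ℝ) ^ 2] = (∅, {i, j}, {i}) := by
  have hb := snd_fst_trace_low_pair hij (s := 1 / 4) (by norm_num) (by norm_num)
  refine Prod.ext (fst_trace_low hd (by positivity)) (Prod.ext hb ?_)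
  rw [snd_snd_trace, hb]
  norm_num [Finset.filter_insert, Finset.filter_singleton, hij]

lemma trace_low_pair_mid (hd : 2 ≤ d) {i j : Fin d} (hij : (j : ℕ) = i + 1) :
    trace d !₂[(i : ℕ) + 1 / 2, -(d : ℝ) ^ 2] = (∅, {i, j}, ∅) := by
  have hb := snd_fst_trace_low_pair hij (s := 1 / 2) (by norm_num) (by norm_num)
  refine Prod.ext (fst_trace_low hd (by positivity)) (Prod.ext hb ?_)
  rw [snd_snd_trace, hb]
  norm_num [Finset.filter_insert, Finset.filter_singleton, hij]

lemma trace_low_pair_right (hd : 2 ≤ d) {i j : Fin d} (hij : (j : ℕ) = i + 1) :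
    trace d !₂[(i : ℕ) + 3 / 4, -(d : ℝ) ^ 2] = (∅, {i, j}, {j}) := by
  have hb := snd_fst_trace_low_pair hij (s := 3 / 4) (by norm_num) (by norm_num)
  refine Prod.ext (fst_trace_low hd (by positivity)) (Prod.ext hb ?_)
  rw [snd_snd_trace, hb]
  norm_num [Finset.filter_insert, Finset.filter_singleton, hij]

lemma trace_above_parabola : trace d !₂[0, 1] = (Finset.univ, ∅, ∅) := by
  have hb : (trace d !₂[0, 1]).2.1 = ∅ := Finset.eq_empty_of_forall_notMem fun j hj => by
    have := (mem_bSet.mp (mem_trace_snd_fst.mp hj)).1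
    simp only [Matrix.cons_val_zero, Matrix.cons_val_one, Matrix.cons_val_fin_one] at this
    nlinarith
  refine Prod.ext (Finset.eq_univ_of_forall fun i => ?_) (Prod.ext hb ?_)
  · refine mem_trace_fst.mpr (mem_aSet.mpr fun k _ => mem_above.mpr ?_)
    simp only [Matrix.cons_val_zero, Matrix.cons_val_one, Matrix.cons_val_fin_one]
    nlinarith
  · rw [snd_snd_trace, hb, Finset.filter_empty]

lemma trace_below_vertex {i : Fin d} {z : ℝ} (hz₀ : 0 ≤ z) (hz₁ : z < 1) :
    trace d !₂[((i : ℕ) : ℝ), ((i : ℕ) : ℝ) ^ 2 - z] =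
      ({i}, if 0 < z then {i} else ∅, if 0 < z then {i} else ∅) := by
  have hi₀ : (0 : ℝ) ≤ (i : ℕ) := Nat.cast_nonneg _
  have hi₁ : ((i : ℕ) : ℝ) + 1 ≤ d := by exact_mod_cast i.2
  have habove : ∀ k : Fin d,
      !₂[((i : ℕ) : ℝ), ((i : ℕ) : ℝ) ^ 2 - z] ∈ above ((k : ℕ) : ℝ) ↔ k ≠ i := by
    intro k
    simp only [mem_above, Matrix.cons_val_zero, Matrix.cons_val_one, Matrix.cons_val_fin_one,
      sub_sub_cancel]
    refine ⟨fun h hki => ?_, fun hki => ?_⟩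
    · have : z < 0 := by simpa [hki] using h
      linarith
    by_contra! h
    exact hki (Fin.ext (natCast_eq_of_abs_sub_lt_one
      (sq_lt_one_iff_abs_lt_one _ |>.mp (by linarith))).symm)
  have hb : (trace d !₂[((i : ℕ) : ℝ), ((i : ℕ) : ℝ) ^ 2 - z]).2.1 =
      if 0 < z then {i} else ∅ := by
    ext k
    simp only [mem_trace_snd_fst, mem_bSet, Matrix.cons_val_zero, Matrix.cons_val_one,
      Matrix.cons_val_fin_one, sub_sub_cancel]
    constructor
    · rintro ⟨hz, hk, -, -⟩
      obtain rfl : i = k := Fin.ext (natCast_eq_of_abs_sub_lt_one hk)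
      simp only [sub_self, ne_eq, OfNat.ofNat_ne_zero, not_false_eq_true, zero_pow] at hz
      simp [hz]
    · split_ifs with hz
      · intro hk
        rw [Finset.mem_singleton.mp hk]
        refine ⟨by simpa using hz, by simp, by linarith, by linarith⟩
      · simp
  refine Prod.ext ?_ (Prod.ext hb ?_)
  · ext l
    simp only [mem_trace_fst, mem_aSet, habove, Finset.mem_singleton]
    exact ⟨fun h => by_contra fun hli => h i (Ne.symm hli) rfl, fun h k hk => h ▸ hk⟩
  · rw [snd_snd_trace, hb]
    split_ifs <;> simp

lemma range_trace (hd : 2 ≤ d) : Set.range (trace d) = codeTriples d := by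
  refine subset_antisymm (Set.range_subset_iff.mpr trace_mem_codeTriples) ?_
  rintro t (rfl | ⟨i, rfl⟩ | ⟨i, j, hij, rfl⟩ | ⟨i, j, hij, rfl⟩ | ⟨i, j, hij, rfl⟩ | ⟨i, rfl⟩ |
    ⟨i, rfl⟩ | rfl)
  · exact ⟨_, trace_low_at_dim hd⟩
  · exact ⟨_, trace_low_natCast hd i⟩
  · exact ⟨_, trace_low_pair_left hd hij⟩
  · exact ⟨_, trace_low_pair_mid hd hij⟩
  · exact ⟨_, trace_low_pair_right hd hij⟩
  · exact ⟨_, by simpa using trace_below_vertex (i := i) (z := 1 / 2) (by norm_num) (by norm_num)⟩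
  · exact ⟨_, by simpa using trace_below_vertex (i := i) (z := 0) le_rfl one_pos⟩
  · exact ⟨_, trace_above_parabola⟩

lemma convex_realization (m : Fin (3 * d)) : Convex ℝ (realization d m) := by
  rcases exists_eq_jdx m with ⟨i, rfl⟩ | ⟨i, rfl⟩ | ⟨i, rfl⟩
  · rw [realization_jdxA]
    exact convex_aSet i
  · rw [realization_jdxB]
    exact convex_bSet i
  · rw [realization_jdxC]
    exact convex_cSet i

lemma isOpen_realization (m : Fin (3 * d)) : IsOpen (realization d m) := by
  rcases exists_eq_jdx m with ⟨i, rfl⟩ | ⟨i, rfl⟩ | ⟨i, rfl⟩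
  · rw [realization_jdxA]
    exact isOpen_aSet i
  · rw [realization_jdxB]
    exact isOpen_bSet i
  · rw [realization_jdxC]
    exact isOpen_cSet i

end Code22d

/-- The code `C_{(2,2,d)}` has an open convex realization in `ℝ^2`. -/
theorem code22d_open_in_plane (d : ℕ) (hd : 2 ≤ d) :
    HasOpenReal (code22d d) 2 := by
  refine ⟨Code22d.realization d, Code22d.convex_realization, Code22d.isOpen_realization, ?_⟩
  rw [codeOf_eq_range (f := Code22d.encode ∘ Code22d.trace d) Code22d.mem_realization_iff,
    Set.range_comp, Code22d.range_trace hd, Code22d.code22d_eq_image_encode]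
end
end

section
/- For every d with 2 ≤ d < ∞, the code C_{(2,2,d)} has a closed convex realization in ℝ^2. -/
open Set

noncomputable section

/-! All the sets are segments (indices run from `0` to `d - 1`). Each `α_i` joins the apex `(0, 1)`
to the point `(5i + 2, 0)`; on the `x`-axis, `γ_i = [5i, 5i + 4]` and `β_i = [5i - 2, 5i + 6]`, the
latter cut down to `[0, 5d - 1]` so that no point lies in a `β` alone. Two `α`'s meet only at the
apex, where all of them meet, so off the axis one sees only `∅`, `{α_i}` and the set of all `α`'s.
A point `5i + u` of `[0, 5d - 1]` on the axis, with `0 ≤ u < 5`, lies in `β_i`; it lies in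
`β_{i-1}` iff `u ≤ 1`, in `β_{i+1}` iff `3 ≤ u`, in `γ_i` iff `u ≤ 4`, in `α_i` iff `u = 2`, and in
no other set. The regions of `u` cut out by these conditions give the codewords (i)–(v). -/

open Classical in
def codewordAt {n k : ℕ} (U : Fin n → Set (Euc k)) (p : Euc k) : Finset (Fin n) :=
  Finset.univ.filter fun i => p ∈ U i

@[simp] lemma mem_codewordAt {n k : ℕ} {U : Fin n → Set (Euc k)} {p : Euc k} {i : Fin n} :
    i ∈ codewordAt U p ↔ p ∈ U i := by
  simp [codewordAt]

lemma codeOf_eq_range_codewordAt {n k : ℕ} (U : Fin n → Set (Euc k)) :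
    codeOf U = range (codewordAt U) := by
  ext σ
  simp only [codeOf, mem_ofPred_eq, mem_range, Finset.ext_iff, mem_codewordAt]

namespace Code22d

variable {d : ℕ}

@[simp] lemma jdxA_val (i : Fin d) : (jdxA d i : ℕ) = i := rfl
@[simp] lemma jdxB_val (i : Fin d) : (jdxB d i : ℕ) = d + i := rfl
@[simp] lemma jdxC_val (i : Fin d) : (jdxC d i : ℕ) = 2 * d + i := rfl

lemma exists_jdx_eq (k : Fin (3 * d)) :
    (∃ i, jdxA d i = k) ∨ (∃ i, jdxB d i = k) ∨ (∃ i, jdxC d i = k) := by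
  obtain ⟨k, hk⟩ := k
  by_cases h1 : k < d
  · exact .inl ⟨⟨k, h1⟩, rfl⟩
  by_cases h2 : k < 2 * d
  · exact .inr <| .inl ⟨⟨k - d, by omega⟩, Fin.ext (by simp; omega)⟩
  · exact .inr <| .inr ⟨⟨k - 2 * d, by omega⟩, Fin.ext (by simp; omega)⟩

lemma finset_ext_jdx {σ τ : Finset (Fin (3 * d))}
    (hA : ∀ i, jdxA d i ∈ σ ↔ jdxA d i ∈ τ) (hB : ∀ i, jdxB d i ∈ σ ↔ jdxB d i ∈ τ)
    (hC : ∀ i, jdxC d i ∈ σ ↔ jdxC d i ∈ τ) : σ = τ := by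
  ext k
  rcases exists_jdx_eq k with ⟨i, rfl⟩ | ⟨i, rfl⟩ | ⟨i, rfl⟩
  exacts [hA i, hB i, hC i]

def axisPt (x : ℝ) : Euc 2 := !₂[x, 0]

def axisIcc (a b : ℝ) : Set (Euc 2) := {p | p 1 = 0 ∧ p 0 ∈ Icc a b}

def spoke (c : ℝ) : Set (Euc 2) := segment ℝ !₂[0, 1] !₂[c, 0]

lemma convex_axisIcc (a b : ℝ) : Convex ℝ (axisIcc a b) :=
  ((convex_singleton 0).linear_preimage (EuclideanSpace.proj 1 : Euc 2 →L[ℝ] ℝ).toLinearMap).inter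
    ((convex_Icc a b).linear_preimage (EuclideanSpace.proj 0 : Euc 2 →L[ℝ] ℝ).toLinearMap)

lemma isClosed_axisIcc (a b : ℝ) : IsClosed (axisIcc a b) :=
  (isClosed_singleton.preimage (EuclideanSpace.proj 1 : Euc 2 →L[ℝ] ℝ).continuous).inter
    (isClosed_Icc.preimage (EuclideanSpace.proj 0 : Euc 2 →L[ℝ] ℝ).continuous)

lemma isClosed_spoke (c : ℝ) : IsClosed (spoke c) := by
  rw [spoke, ← convexHull_pair]; exact (toFinite _).isClosed_convexHull ℝ

lemma mem_spoke_iff {c : ℝ} {p : Euc 2} :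
    p ∈ spoke c ↔ 0 ≤ p 1 ∧ p 1 ≤ 1 ∧ p 0 = c * (1 - p 1) := by
  constructor
  · rintro ⟨a, b, ha, hb, hab, rfl⟩
    simp only [PiLp.add_apply, PiLp.smul_apply, Matrix.cons_val_zero, Matrix.cons_val_one,
      Matrix.cons_val_fin_one, smul_eq_mul, mul_zero, mul_one, add_zero, zero_add]
    refine ⟨ha, by linarith, by rw [← hab]; ring⟩
  · rintro ⟨h0, h1, hx⟩
    refine ⟨p 1, 1 - p 1, h0, by linarith, by ring, ?_⟩
    ext i; fin_cases i <;> simp [hx]; ring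

lemma axisPt_mem_axisIcc {x a b : ℝ} : axisPt x ∈ axisIcc a b ↔ a ≤ x ∧ x ≤ b := by
  simp [axisPt, axisIcc]

lemma axisPt_mem_spoke {x c : ℝ} : axisPt x ∈ spoke c ↔ x = c := by
  simp [axisPt, mem_spoke_iff]

lemma mem_spoke_iff_of_mem_spoke {c c' : ℝ} {p : Euc 2} (h : p ∈ spoke c) (hp : p 1 ≠ 1) :
    p ∈ spoke c' ↔ c' = c := by
  rw [mem_spoke_iff] at h ⊢
  obtain ⟨h0, h1, hx⟩ := h
  have : 1 - p 1 ≠ 0 := sub_ne_zero.2 hp.symm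
  constructor
  · rintro ⟨-, -, hx'⟩
    exact mul_right_cancel₀ this (hx' ▸ hx)
  · rintro rfl
    exact ⟨h0, h1, hx⟩

def alpha (m : ℕ) : Set (Euc 2) := spoke (5 * m + 2)

def beta (d m : ℕ) : Set (Euc 2) := axisIcc (5 * m - 2) (5 * m + 6) ∩ axisIcc 0 (5 * d - 1)

def gamma (m : ℕ) : Set (Euc 2) := axisIcc (5 * m) (5 * m + 4)

def planarRealization (d : ℕ) (k : Fin (3 * d)) : Set (Euc 2) :=
  if k < d then alpha k else if k < 2 * d then beta d (k - d) else gamma (k - 2 * d)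

@[simp] lemma planarRealization_jdxA (i : Fin d) : planarRealization d (jdxA d i) = alpha i := by
  simp [planarRealization]

@[simp] lemma planarRealization_jdxB (i : Fin d) :
    planarRealization d (jdxB d i) = beta d i := by
  simp [planarRealization]
  omega

@[simp] lemma planarRealization_jdxC (i : Fin d) : planarRealization d (jdxC d i) = gamma i := by
  simp [planarRealization]
  omega

lemma convex_planarRealization (k : Fin (3 * d)) : Convex ℝ (planarRealization d k) := by
  unfold planarRealization alpha beta gamma
  split_ifs
  exacts [convex_segment _ _, (convex_axisIcc _ _).inter (convex_axisIcc _ _), convex_axisIcc _ _]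

lemma isClosed_planarRealization (k : Fin (3 * d)) : IsClosed (planarRealization d k) := by
  unfold planarRealization alpha beta gamma
  split_ifs
  exacts [isClosed_spoke _, (isClosed_axisIcc _ _).inter (isClosed_axisIcc _ _),
    isClosed_axisIcc _ _]

section Cell

variable {i : ℕ} {u : ℝ}

lemma axisPt_cell_mem_alpha_iff (hu0 : 0 ≤ u) (hu5 : u < 5) (m : ℕ) :
    axisPt (5 * i + u) ∈ alpha m ↔ m = i ∧ u = 2 := by
  rw [alpha, axisPt_mem_spoke]
  constructor
  · intro h
    have hm : m < i + 1 := by exact_mod_cast (show (m : ℝ) < i + 1 by linarith)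
    have hi : i < m + 1 := by exact_mod_cast (show (i : ℝ) < m + 1 by linarith)
    obtain rfl : m = i := by omega
    exact ⟨rfl, by linarith⟩
  · rintro ⟨rfl, rfl⟩
    ring

lemma axisPt_cell_mem_gamma_iff (hu0 : 0 ≤ u) (hu5 : u < 5) (m : ℕ) :
    axisPt (5 * i + u) ∈ gamma m ↔ m = i ∧ u ≤ 4 := by
  rw [gamma, axisPt_mem_axisIcc]
  constructor
  · rintro ⟨h1, h2⟩
    have hm : m < i + 1 := by exact_mod_cast (show (m : ℝ) < i + 1 by linarith)
    have hi : i < m + 1 := by exact_mod_cast (show (i : ℝ) < m + 1 by linarith)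
    obtain rfl : m = i := by omega
    exact ⟨rfl, by linarith⟩
  · rintro ⟨rfl, hu⟩
    constructor <;> linarith

lemma axisPt_cell_mem_beta_iff (hi : i < d) (hu0 : 0 ≤ u) (hu5 : u < 5) (hx : u ≤ 4 ∨ i + 1 < d)
    (m : ℕ) :
    axisPt (5 * i + u) ∈ beta d m ↔ m = i ∨ (m + 1 = i ∧ u ≤ 1) ∨ (m = i + 1 ∧ 3 ≤ u) := by
  have hx' : 5 * i + u ≤ 5 * d - 1 := by
    rcases hx with hu4 | hi1
    · linarith [show (i : ℝ) + 1 ≤ d by exact_mod_cast hi]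
    · linarith [show (i : ℝ) + 2 ≤ d by exact_mod_cast hi1]
  rw [beta, mem_inter_iff, axisPt_mem_axisIcc, axisPt_mem_axisIcc,
    and_iff_left ⟨by positivity, hx'⟩]
  constructor
  · rintro ⟨h1, h2⟩
    have hm : m < i + 2 := by exact_mod_cast (show (m : ℝ) < i + 2 by linarith)
    have hi : i < m + 2 := by exact_mod_cast (show (i : ℝ) < m + 2 by linarith)
    obtain rfl | rfl | rfl : m + 1 = i ∨ m = i ∨ m = i + 1 := by omega
    · push_cast at h2; exact .inr (.inl ⟨rfl, by linarith⟩)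
    · exact .inl rfl
    · push_cast at h1; exact .inr (.inr ⟨rfl, by linarith⟩)
  · rintro (rfl | ⟨rfl, hu⟩ | ⟨rfl, hu⟩) <;> push_cast <;> constructor <;> linarith

lemma codewordAt_cell_eq {τ : Finset (Fin (3 * d))} (hi : i < d) (hu0 : 0 ≤ u) (hu5 : u < 5)
    (hx : u ≤ 4 ∨ i + 1 < d)
    (hτ : ∀ m : Fin d, (jdxA d m ∈ τ ↔ m = i ∧ u = 2) ∧
      (jdxB d m ∈ τ ↔ m = i ∨ (m + 1 = i ∧ u ≤ 1) ∨ (m = i + 1 ∧ 3 ≤ u)) ∧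
      (jdxC d m ∈ τ ↔ m = i ∧ u ≤ 4)) :
    codewordAt (planarRealization d) (axisPt (5 * i + u)) = τ :=
  finset_ext_jdx
    (fun m => by simp [axisPt_cell_mem_alpha_iff hu0 hu5, (hτ m).1])
    (fun m => by simp [axisPt_cell_mem_beta_iff hi hu0 hu5 hx, (hτ m).2.1])
    (fun m => by simp [axisPt_cell_mem_gamma_iff hu0 hu5, (hτ m).2.2])

lemma codewordAt_cell_mem_code22d (hi : i < d) (hu0 : 0 ≤ u) (hu5 : u < 5)
    (hx : u ≤ 4 ∨ i + 1 < d) :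
    codewordAt (planarRealization d) (axisPt (5 * i + u)) ∈ code22d d := by
  have cell := fun τ => codewordAt_cell_eq (τ := τ) hi hu0 hu5 hx
  rcases le_or_gt u 1 with h1 | h1
  · by_cases hi0 : i = 0
    · exact .inr <| .inl ⟨⟨i, hi⟩, cell _ fun m => by simp [Fin.ext_iff]; grind⟩
    · exact .inr <| .inr <| .inr <| .inr <| .inl ⟨⟨i - 1, by omega⟩, ⟨i, hi⟩, by simp; omega,
        cell _ fun m => by simp [Fin.ext_iff]; grind⟩
  rcases lt_or_ge u 3 with h3 | h3
  · by_cases h2 : u = 2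
    · exact .inr <| .inr <| .inr <| .inr <| .inr <| .inl ⟨⟨i, hi⟩,
        cell _ fun m => by simp [Fin.ext_iff]; grind⟩
    · exact .inr <| .inl ⟨⟨i, hi⟩, cell _ fun m => by simp [Fin.ext_iff]; grind⟩
  rcases le_or_gt u 4 with h4 | h4
  · by_cases hi1 : i + 1 < d
    · exact .inr <| .inr <| .inl ⟨⟨i, hi⟩, ⟨i + 1, hi1⟩, rfl,
        cell _ fun m => by simp [Fin.ext_iff]; grind⟩
    · exact .inr <| .inl ⟨⟨i, hi⟩, cell _ fun m => by simp [Fin.ext_iff]; grind⟩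
  · have hi1 : i + 1 < d := hx.resolve_left h4.not_ge
    exact .inr <| .inr <| .inr <| .inl ⟨⟨i, hi⟩, ⟨i + 1, hi1⟩, rfl,
      cell _ fun m => by simp [Fin.ext_iff]; grind⟩

end Cell

lemma exists_cell {x : ℝ} (hx : 0 ≤ x) : ∃ (i : ℕ) (u : ℝ), 0 ≤ u ∧ u < 5 ∧ x = 5 * i + u := by
  refine ⟨⌊x / 5⌋₊, x - 5 * ⌊x / 5⌋₊, ?_, ?_, by ring⟩
  · linarith [Nat.floor_le (div_nonneg hx (by norm_num : (0 : ℝ) ≤ 5))]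
  · linarith [Nat.lt_floor_add_one (x / 5)]

lemma codewordAt_axisPt_eq_empty {x : ℝ} (hx : ¬ (0 ≤ x ∧ x ≤ 5 * d - 1)) :
    codewordAt (planarRealization d) (axisPt x) = ∅ := by
  have hd (m : Fin d) : (m : ℝ) + 1 ≤ d := by exact_mod_cast m.2
  refine finset_ext_jdx (fun m => ?_) (fun m => ?_) (fun m => ?_) <;>
    simp [alpha, beta, gamma, axisPt_mem_spoke, axisPt_mem_axisIcc] <;> grind [hd m]

lemma codewordAt_axisPt_mem_code22d (x : ℝ) :
    codewordAt (planarRealization d) (axisPt x) ∈ code22d d := by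
  by_cases hx : 0 ≤ x ∧ x ≤ 5 * d - 1
  · obtain ⟨i, u, hu0, hu5, rfl⟩ := exists_cell hx.1
    have hi : i < d := by exact_mod_cast (show (i : ℝ) < d by linarith)
    refine codewordAt_cell_mem_code22d hi hu0 hu5 (or_iff_not_imp_left.2 fun hu4 => ?_)
    exact_mod_cast (show (i : ℝ) + 1 < d by linarith)
  · exact .inl (codewordAt_axisPt_eq_empty hx)

section OffAxis

variable {p : Euc 2}

lemma not_mem_beta_of_ne_axis (hp : p 1 ≠ 0) (m : ℕ) : p ∉ beta d m := fun h => hp h.1.1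

lemma not_mem_gamma_of_ne_axis (hp : p 1 ≠ 0) (m : ℕ) : p ∉ gamma m := fun h => hp h.1

lemma codewordAt_eq_singleton {i : Fin d} (hp0 : p 1 ≠ 0) (hp1 : p 1 ≠ 1) (hi : p ∈ alpha i) :
    codewordAt (planarRealization d) p = {jdxA d i} := by
  have hA (m : Fin d) : p ∈ alpha m ↔ m = i :=
    (mem_spoke_iff_of_mem_spoke hi hp1).trans (by simp [Fin.ext_iff])
  refine finset_ext_jdx (fun m => ?_) (fun m => ?_) (fun m => ?_) <;>
    simp [hA, not_mem_beta_of_ne_axis hp0, not_mem_gamma_of_ne_axis hp0, Fin.ext_iff]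
  all_goals omega

lemma codewordAt_apex : codewordAt (planarRealization d) !₂[0, 1] = Finset.univ.image (jdxA d) := by
  have hA (m : ℕ) : !₂[0, 1] ∈ alpha m := by simp [alpha, mem_spoke_iff]
  have hp : (!₂[0, 1] : Euc 2) 1 ≠ 0 := by simp
  refine finset_ext_jdx (fun m => ?_) (fun m => ?_) (fun m => ?_) <;>
    simp [hA, not_mem_beta_of_ne_axis hp, not_mem_gamma_of_ne_axis hp, Fin.ext_iff]
  all_goals omega

lemma codewordAt_mem_code22d_of_ne_axis (hp : p 1 ≠ 0) :
    codewordAt (planarRealization d) p ∈ code22d d := by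
  by_cases hα : ∃ i : Fin d, p ∈ alpha i
  · obtain ⟨i, hi⟩ := hα
    by_cases h1 : p 1 = 1
    · have hp0 : p 0 = 0 := by simpa [h1] using ((mem_spoke_iff).1 hi).2.2
      have : p = !₂[0, 1] := by ext j; fin_cases j <;> simp [hp0, h1]
      exact .inr <| .inr <| .inr <| .inr <| .inr <| .inr <| .inr <| this ▸ codewordAt_apex
    · exact .inr <| .inr <| .inr <| .inr <| .inr <| .inr <| .inl
        ⟨i, codewordAt_eq_singleton hp h1 hi⟩
  · simp only [not_exists] at hα
    refine .inl <| finset_ext_jdx (fun m => ?_) (fun m => ?_) (fun m => ?_) <;>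
      simp [hα, not_mem_beta_of_ne_axis hp, not_mem_gamma_of_ne_axis hp]

end OffAxis

lemma codewordAt_mem_code22d (p : Euc 2) : codewordAt (planarRealization d) p ∈ code22d d := by
  by_cases hp : p 1 = 0
  · have : p = axisPt (p 0) := by ext j; fin_cases j <;> simp [axisPt, hp]
    exact this ▸ codewordAt_axisPt_mem_code22d (p 0)
  · exact codewordAt_mem_code22d_of_ne_axis hp

lemma code22d_subset_range_codewordAt : code22d d ⊆ range (codewordAt (planarRealization d)) := by
  rintro σ (rfl | ⟨i, rfl⟩ | ⟨i, j, hij, rfl⟩ | ⟨i, j, hij, rfl⟩ | ⟨i, j, hij, rfl⟩ | ⟨i, rfl⟩ |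
    ⟨i, rfl⟩ | rfl)
  · exact ⟨axisPt (-1), codewordAt_axisPt_eq_empty (by norm_num)⟩
  · exact ⟨_, codewordAt_cell_eq (u := 3 / 2) i.2 (by norm_num) (by norm_num) (.inl (by norm_num))
      fun m => by norm_num [Fin.ext_iff]; omega⟩
  · exact ⟨_, codewordAt_cell_eq (u := 7 / 2) i.2 (by norm_num) (by norm_num) (.inl (by norm_num))
      fun m => by norm_num [Fin.ext_iff]; omega⟩
  · exact ⟨_, codewordAt_cell_eq (u := 9 / 2) i.2 (by norm_num) (by norm_num) (.inr (by omega))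
      fun m => by norm_num [Fin.ext_iff]; omega⟩
  · exact ⟨_, codewordAt_cell_eq (u := 1 / 2) j.2 (by norm_num) (by norm_num) (.inl (by norm_num))
      fun m => by norm_num [Fin.ext_iff]; omega⟩
  · exact ⟨_, codewordAt_cell_eq (u := 2) i.2 (by norm_num) (by norm_num) (.inl (by norm_num))
      fun m => by norm_num [Fin.ext_iff]; omega⟩
  · refine ⟨!₂[(5 * i + 2) / 2, 1 / 2], codewordAt_eq_singleton (by norm_num) (by norm_num) ?_⟩
    simp only [alpha, mem_spoke_iff]
    norm_num
    ring
  · exact ⟨_, codewordAt_apex⟩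

end Code22d

theorem code22d_closed_in_plane_general (d : ℕ) :
    HasClosedReal (code22d d) 2 := by
  refine ⟨Code22d.planarRealization d, Code22d.convex_planarRealization,
    Code22d.isClosed_planarRealization, ?_⟩
  rw [codeOf_eq_range_codewordAt]
  exact (range_subset_iff.2 Code22d.codewordAt_mem_code22d).antisymm
    Code22d.code22d_subset_range_codewordAt

/-- The code `C_{(2,2,d)}` has a closed convex realization in `ℝ^2`. -/
theorem code22d_closed_in_plane (d : ℕ) (hd : 2 ≤ d) :
    HasClosedReal (code22d d) 2 :=
  code22d_closed_in_plane_general d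

end
end

section
/- The code C_{(∞,2,∞)} = {{2,3,4,5}, {1,2,3}, {1,3,4}, {1,4,5}, {1,3}, {1,4}, {2,3}, {3,4}, {4,5}, {3}, {4}, ∅} on [5] has embedding dimension vector (∞, 2, ∞): it has no open convex realization in ℝ^d for any d (hence also no non-degenerate convex realization in any dimension), while it has a closed convex realization in ℝ^2 and no closed convex realization in ℝ^1. -/
open Set

noncomputable section

/-- The code `C_{(∞,2,∞)}` on `[5]` (indices shifted to `Fin 5`):
`{2345, 123, 134, 145, 13, 14, 23, 34, 45, 3, 4, ∅}`. -/
def codeI2I : Set (Finset (Fin 5)) :=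
  {{1, 2, 3, 4}, {0, 1, 2}, {0, 2, 3}, {0, 3, 4}, {0, 2}, {0, 3}, {1, 2}, {2, 3}, {3, 4},
    {2}, {3}, (∅ : Finset (Fin 5))}

/-!
The code forces `U 1 ⊆ U 2`, `U 4 ⊆ U 3`, `U 1 ∩ U 3 = U 2 ∩ U 4 =: B`, `U 0 ⊆ U 2 ∪ U 3` and
`U 0 ∩ B = ∅`, and these incidences characterize it. Suppose the `U i` are open and convex, and
restrict to the plane through points `p`, `q`, `w` with codewords `{0,1,2}`, `{0,3,4}`,
`{1,2,3,4}`, with `p q` as horizontal axis. Since `[p, q] ⊆ U 0`, the axis contains a point `x` of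
`U 2 ∩ U 3`, and `B` lies strictly above the axis. Let `z` be a lowest point of a bounded part of
the closure of `B`. A horizontal line just below `z` meets `[p, z]` outside `U 3` and `[q, z]`
outside `U 2`, so it meets the cone from `x` over `B` only between these two points. As the line
rises to `z` these points merge, while the cone over a small disc in `B` keeps a definite width.

A closed realization exists because `B` may then be a ray on the common boundary line of `U 2`
and `U 3`; on a line, one of `p`, `q`, `w` would lie between the other two.
-/

open Metric

section Pattern

variable {X : Type*} {n : ℕ}

open Classical in
def pattern (U : Fin n → Set X) (z : X) : Finset (Fin n) := {i | z ∈ U i}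

@[simp]
lemma mem_pattern {U : Fin n → Set X} {z : X} {i : Fin n} : i ∈ pattern U z ↔ z ∈ U i := by
  simp [pattern]

lemma pattern_eq_iff {U : Fin n → Set X} {z : X} {σ : Finset (Fin n)} :
    pattern U z = σ ↔ ∀ i, z ∈ U i ↔ i ∈ σ := by
  simp [Finset.ext_iff]

lemma codeOf_eq_iff {d : ℕ} {U : Fin n → Set (Euc d)} {C : Set (Finset (Fin n))} :
    codeOf U = C ↔ (∀ z, pattern U z ∈ C) ∧ C ⊆ range (pattern U) := by
  have : codeOf U = range (pattern U) := by
    ext σ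
    simp [codeOf, pattern_eq_iff]
  rw [this, Subset.antisymm_iff, range_subset_iff]

end Pattern

section Incidences

variable {X : Type*}

structure CodeI2IIncidences (U : Fin 5 → Set X) : Prop where
  one_subset_two : U 1 ⊆ U 2
  four_subset_three : U 4 ⊆ U 3
  one_inter_three_subset_four : U 1 ∩ U 3 ⊆ U 4
  two_inter_four_subset_one : U 2 ∩ U 4 ⊆ U 1
  zero_subset_two_union_three : U 0 ⊆ U 2 ∪ U 3
  disjoint_zero_one_inter_three : Disjoint (U 0) (U 1 ∩ U 3)

lemma mem_codeI2I_iff (σ : Finset (Fin 5)) :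
    σ ∈ codeI2I ↔ (1 ∈ σ → 2 ∈ σ) ∧ (4 ∈ σ → 3 ∈ σ) ∧ (1 ∈ σ → 3 ∈ σ → 4 ∈ σ) ∧
      (2 ∈ σ → 4 ∈ σ → 1 ∈ σ) ∧ (0 ∈ σ → 2 ∈ σ ∨ 3 ∈ σ) ∧ ¬(0 ∈ σ ∧ 1 ∈ σ ∧ 3 ∈ σ) := by
  simp only [codeI2I, Set.mem_insert_iff, Set.mem_singleton_iff]
  revert σ
  decide

lemma forall_pattern_mem_codeI2I_iff {U : Fin 5 → Set X} :
    (∀ z, pattern U z ∈ codeI2I) ↔ CodeI2IIncidences U := by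
  simp only [mem_codeI2I_iff, mem_pattern]
  constructor
  · intro h
    exact ⟨fun z hz => (h z).1 hz, fun z hz => (h z).2.1 hz,
      fun z hz => (h z).2.2.1 hz.1 hz.2, fun z hz => (h z).2.2.2.1 hz.1 hz.2,
      fun z hz => (h z).2.2.2.2.1 hz, disjoint_left.2 fun z h0 h13 => (h z).2.2.2.2.2 ⟨h0, h13⟩⟩
  · intro hU z
    exact ⟨@hU.1 z, @hU.2 z, fun h1 h3 => hU.3 ⟨h1, h3⟩, fun h2 h4 => hU.4 ⟨h2, h4⟩, @hU.5 z,
      fun h => disjoint_left.1 hU.6 h.1 h.2⟩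

lemma CodeI2IIncidences.preimage {Y : Type*} {U : Fin 5 → Set X} (hU : CodeI2IIncidences U)
    (f : Y → X) : CodeI2IIncidences (fun i => f ⁻¹' U i) :=
  ⟨fun _ h => hU.1 h, fun _ h => hU.2 h, fun _ h => hU.3 h, fun _ h => hU.4 h, fun _ h => hU.5 h,
    hU.6.preimage f⟩

end Incidences

section Convexity

lemma Convex.slice {E F : Type*} [AddCommGroup E] [Module ℝ E] [AddCommGroup F] [Module ℝ F]
    {U : Set (E × F)} (hU : Convex ℝ U) (y : F) : Convex ℝ ((·, y) ⁻¹' U) := by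
  intro a ha b hb s t hs ht hst
  show (s • a + t • b, y) ∈ U
  convert hU ha hb hs ht hst using 1
  ext <;> simp [← add_smul, hst]

lemma IsOpen.add_smul_sub_mem_of_mem_closure {E : Type*} [AddCommGroup E] [Module ℝ E]
    [TopologicalSpace E] [IsTopologicalAddGroup E] [ContinuousSMul ℝ E] {U : Set E}
    (ho : IsOpen U) (hc : Convex ℝ U) {x y : E} (hx : x ∈ closure U) (hy : y ∈ U) {t : ℝ}
    (ht : t ∈ Ioc 0 1) : x + t • (y - x) ∈ U := by
  simpa [ho.interior_eq] using hc.add_smul_sub_mem_interior' hx (ho.interior_eq.symm ▸ hy) ht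

lemma mem_Ioo_of_mem_inter_of_mem_diff {S T : Set ℝ} (hS : Convex ℝ S) (hT : Convex ℝ T)
    {a c y : ℝ} (ha : a ∈ S \ T) (hc : c ∈ T \ S) (hac : a ≤ c) (hy : y ∈ S ∩ T) : y ∈ Ioo a c := by
  constructor <;> by_contra! h
  · exact ha.2 (hT.ordConnected.out hy.2 hc.1 ⟨h, hac⟩)
  · exact hc.2 (hS.ordConnected.out ha.1 hy.1 ⟨hac, h⟩)

lemma IsPreconnected.pos_of_ne_zero {X : Type*} [TopologicalSpace X] {s : Set X}
    (hs : IsPreconnected s) {f : X → ℝ} (hf : ContinuousOn f s) (hne : ∀ z ∈ s, f z ≠ 0)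
    {w : X} (hw : w ∈ s) (hpos : 0 < f w) {z : X} (hz : z ∈ s) : 0 < f z := by
  by_contra! h
  obtain ⟨y, hy, hy0⟩ := hs.intermediate_value hz hw hf ⟨h, hpos.le⟩
  exact hne y hy hy0

lemma Collinear.mem_or_mem_or_mem_of_convex {E : Type*} [AddCommGroup E] [Module ℝ E]
    {p q w : E} (hcol : Collinear ℝ {p, q, w}) {A B C : Set E} (hA : Convex ℝ A)
    (hB : Convex ℝ B) (hC : Convex ℝ C) (hp : p ∈ A ∩ B) (hq : q ∈ A ∩ C) (hw : w ∈ B ∩ C) :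
    p ∈ C ∨ q ∈ B ∨ w ∈ A := by
  rcases hcol.wbtw_or_wbtw_or_wbtw with h | h | h
  · exact Or.inr (Or.inl (hB.segment_subset hp.2 hw.1 h.mem_segment))
  · exact Or.inr (Or.inr (hA.segment_subset hq.1 hp.1 h.mem_segment))
  · exact Or.inl (hC.segment_subset hw.2 hq.2 h.mem_segment)

end Convexity

namespace CodeI2IIncidences

variable {U : Fin 5 → Set (ℝ × ℝ)}

lemma exists_axis_mem_two_inter_three (hU : CodeI2IIncidences U) (hconv : ∀ i, Convex ℝ (U i))
    (hopen : ∀ i, IsOpen (U i)) (hp : ((0 : ℝ), (0 : ℝ)) ∈ U 0 ∩ U 1)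
    (hq : ((1 : ℝ), (0 : ℝ)) ∈ U 0 ∩ U 4) : ∃ s : ℝ, (s, (0 : ℝ)) ∈ U 2 ∩ U 3 := by
  have hseg : Icc (0 : ℝ) 1 ⊆ (·, (0 : ℝ)) ⁻¹' U 0 :=
    ((hconv 0).slice 0).ordConnected.out hp.1 hq.1
  obtain ⟨s, -, hs⟩ := isPreconnected_Icc ((·, (0 : ℝ)) ⁻¹' U 2) ((·, (0 : ℝ)) ⁻¹' U 3)
    ((hopen 2).preimage (by fun_prop)) ((hopen 3).preimage (by fun_prop))
    (fun s hs => hU.zero_subset_two_union_three (hseg hs))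
    ⟨0, left_mem_Icc.2 zero_le_one, hU.one_subset_two hp.2⟩
    ⟨1, right_mem_Icc.2 zero_le_one, hU.four_subset_three hq.2⟩
  exact ⟨s, hs⟩

lemma snd_ne_zero_of_mem_closure (hU : CodeI2IIncidences U) (hconv : ∀ i, Convex ℝ (U i))
    (hopen : ∀ i, IsOpen (U i)) (hp : ((0 : ℝ), (0 : ℝ)) ∈ (U 0 ∩ U 1) \ U 4)
    (hq : ((1 : ℝ), (0 : ℝ)) ∈ (U 0 ∩ U 4) \ U 1) {z : ℝ × ℝ} (hz : z ∈ closure (U 1 ∩ U 3)) :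
    z.2 ≠ 0 := by
  intro hz2
  obtain ⟨t, rfl⟩ : ∃ t : ℝ, z = (t, 0) := ⟨z.1, Prod.ext rfl hz2⟩
  rcases lt_or_ge t 0 with ht0 | ht0
  · -- `p` lies on the segment from `q ∈ U 4` to `(t, 0) ∈ closure (U 4)`
    have h4 : (t, (0 : ℝ)) ∈ closure (U 4) :=
      closure_mono (fun _ h => hU.one_inter_three_subset_four h) hz
    have hmem := (hopen 4).add_smul_sub_mem_of_mem_closure (hconv 4) h4 hq.1.2
      (t := -t / (1 - t)) ⟨by apply div_pos <;> linarith, by rw [div_le_one] <;> linarith⟩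
    have ht : 1 - t ≠ 0 := by linarith
    exact hp.2 (by convert hmem using 1; ext <;> simp; field_simp; ring)
  rcases le_or_gt t 1 with ht1 | ht1
  · have h0 : (t, (0 : ℝ)) ∈ U 0 := ((hconv 0).slice 0).ordConnected.out hp.1.1 hq.1.1 ⟨ht0, ht1⟩
    obtain ⟨b, hb0, hb⟩ := mem_closure_iff.1 hz _ (hopen 0) h0
    exact disjoint_left.1 hU.disjoint_zero_one_inter_three hb0 hb
  · -- `q` lies on the segment from `p ∈ U 1` to `(t, 0) ∈ closure (U 1)`
    have hmem := (hopen 1).add_smul_sub_mem_of_mem_closure (hconv 1)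
      (closure_mono inter_subset_left hz) hp.1.2 (t := (t - 1) / t) ⟨by apply div_pos <;> linarith, by rw [div_le_one] <;> linarith⟩
    have ht : t ≠ 0 := by linarith
    exact hq.2 (by convert hmem using 1; ext <;> simp; field_simp; ring)

lemma exists_lowest_mem_closure (hU : CodeI2IIncidences U) (hconv : ∀ i, Convex ℝ (U i))
    (hopen : ∀ i, IsOpen (U i)) (hp : ((0 : ℝ), (0 : ℝ)) ∈ (U 0 ∩ U 1) \ U 4)
    (hq : ((1 : ℝ), (0 : ℝ)) ∈ (U 0 ∩ U 4) \ U 1) (hw : ((0 : ℝ), (1 : ℝ)) ∈ U 1 ∩ U 3) :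
    ∃ z ∈ closure (U 1 ∩ U 3) ∩ closedBall 0 1,
      0 < z.2 ∧ ∀ y ∈ closure (U 1 ∩ U 3) ∩ closedBall 0 1, z.2 ≤ y.2 := by
  have hwK : ((0 : ℝ), (1 : ℝ)) ∈ closure (U 1 ∩ U 3) ∩ closedBall 0 1 :=
    ⟨subset_closure hw, by simp [Prod.norm_def]⟩
  obtain ⟨z, hz, hmin⟩ := ((isCompact_closedBall _ _).inter_left isClosed_closure).exists_isMinOn
    ⟨_, hwK⟩ continuous_snd.continuousOn
  refine ⟨z, hz, ?_, fun y hy => hmin hy⟩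
  exact ((hconv 1).inter (hconv 3)).closure.isPreconnected.pos_of_ne_zero
    continuous_snd.continuousOn (fun y hy => hU.snd_ne_zero_of_mem_closure hconv hopen hp hq hy)
    hwK.1 one_pos hz.1

lemma mem_Ioo_of_below_lowest (hU : CodeI2IIncidences U) (hconv : ∀ i, Convex ℝ (U i))
    (hopen : ∀ i, IsOpen (U i)) (hp : ((0 : ℝ), (0 : ℝ)) ∈ U 1) (hq : ((1 : ℝ), (0 : ℝ)) ∈ U 4)
    {z : ℝ × ℝ} (hz : z ∈ closure (U 1 ∩ U 3) ∩ closedBall 0 1)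
    (hmin : ∀ y ∈ closure (U 1 ∩ U 3) ∩ closedBall 0 1, z.2 ≤ y.2) {h : ℝ} (h0 : 0 < h)
    (hz2 : h < z.2) {s : ℝ} (hs : (s, h) ∈ U 2 ∩ U 3) :
    s ∈ Ioo (h / z.2 * z.1) (h / z.2 * z.1 + (1 - h / z.2)) := by
  set t := 1 - h / z.2
  have hz0 : 0 < z.2 := h0.trans hz2
  have ht : t ∈ Ioc 0 1 := ⟨by simp [t, div_lt_one hz0, hz2],
    by simpa [t] using div_nonneg h0.le hz0.le⟩
  have ha : z + t • ((0, 0) - z) = (h / z.2 * z.1, h) := by ext <;> simp [t] <;> field_simp <;> ring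
  have hc : z + t • ((1, 0) - z) = (h / z.2 * z.1 + t, h) := by
    ext <;> simp [t] <;> field_simp <;> ring
  have hlow : ∀ u ∈ closedBall (0 : ℝ × ℝ) 1, u.2 = 0 → z + t • (u - z) ∉ U 1 ∩ U 3 := by
    intro u hu hu2 hB
    have := hmin _ ⟨subset_closure hB, (convex_closedBall _ _).add_smul_sub_mem hz.2 hu
      ⟨ht.1.le, ht.2⟩⟩
    simp only [Prod.snd_add, Prod.smul_snd, Prod.snd_sub, hu2, smul_eq_mul] at this
    linarith [mul_pos ht.1 hz0]
  have ha1 := (hopen 1).add_smul_sub_mem_of_mem_closure (hconv 1)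
    (closure_mono inter_subset_left hz.1) hp ht
  have hc4 := (hopen 4).add_smul_sub_mem_of_mem_closure (hconv 4)
    (closure_mono (fun _ h => hU.one_inter_three_subset_four h) hz.1) hq ht
  have ha3 := hlow (0, 0) (by simp) rfl
  have hc3 := hlow (1, 0) (by simp [Prod.norm_def]) rfl
  rw [ha] at ha1 ha3
  rw [hc] at hc4 hc3
  refine mem_Ioo_of_mem_inter_of_mem_diff ((hconv 2).slice h) ((hconv 3).slice h)
    ⟨hU.one_subset_two ha1, fun h3 => ha3 ⟨ha1, h3⟩⟩
    ⟨hU.four_subset_three hc4, fun h2 => hc3 ⟨hU.two_inter_four_subset_one ⟨h2, hc4⟩,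
      hU.four_subset_three hc4⟩⟩ (by linarith [ht.1]) hs

theorem false_of_isOpen_plane (hU : CodeI2IIncidences U) (hconv : ∀ i, Convex ℝ (U i))
    (hopen : ∀ i, IsOpen (U i)) (hp : ((0 : ℝ), (0 : ℝ)) ∈ (U 0 ∩ U 1) \ U 4)
    (hq : ((1 : ℝ), (0 : ℝ)) ∈ (U 0 ∩ U 4) \ U 1) (hw : ((0 : ℝ), (1 : ℝ)) ∈ U 1 ∩ U 3) :
    False := by
  obtain ⟨x, hx⟩ := hU.exists_axis_mem_two_inter_three hconv hopen hp.1 hq.1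
  obtain ⟨z, hz, hz0, hmin⟩ := hU.exists_lowest_mem_closure hconv hopen hp hq hw
  have hz1 : z.2 ≤ 1 := hmin _ ⟨subset_closure hw, by simp [Prod.norm_def]⟩
  obtain ⟨ε, hε, hball⟩ := Metric.isOpen_iff.1 ((hopen 1).inter (hopen 3)) _ hw
  have hw' : ((ε / 2, 1) : ℝ × ℝ) ∈ U 1 ∩ U 3 :=
    hball (by simp [Prod.dist_eq, abs_of_pos hε, hε])
  -- at height `h`, the segments from `x` to `w` and to `(ε / 2, 1)` are `h * (ε / 2)` apart,
  -- which is the whole width `1 - h / z.2` that `mem_Ioo_of_below_lowest` leaves them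
  set h := z.2 / (1 + z.2 * (ε / 2))
  have hpos : 0 < 1 + z.2 * (ε / 2) := by positivity
  have h0 : 0 < h := by positivity
  have hlt : h < z.2 := by
    rw [div_lt_iff₀ hpos]
    linarith [mul_pos hz0 (mul_pos hz0 (half_pos hε))]
  have hwidth : h * (ε / 2) + h / z.2 = 1 := by simp only [h]; field_simp; ring
  have h23 : Convex ℝ (U 2 ∩ U 3) := (hconv 2).inter (hconv 3)
  have hB23 : U 1 ∩ U 3 ⊆ U 2 ∩ U 3 := fun y hy => ⟨hU.one_subset_two hy.1, hy.2⟩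
  have hy := h23.add_smul_sub_mem hx (hB23 hw) ⟨h0.le, hlt.le.trans hz1⟩
  have hy' := h23.add_smul_sub_mem hx (hB23 hw') ⟨h0.le, hlt.le.trans hz1⟩
  have hleft := (hU.mem_Ioo_of_below_lowest hconv hopen hp.1.2 hq.1.2 hz hmin h0 hlt
    (s := x * (1 - h)) (by convert hy using 1; ext <;> simp; ring)).1
  have hright := (hU.mem_Ioo_of_below_lowest hconv hopen hp.1.2 hq.1.2 hz hmin h0 hlt
    (s := x * (1 - h) + h * (ε / 2)) (by convert hy' using 1; ext <;> simp; ring)).2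
  linarith

theorem false_of_isOpen {E : Type*} [AddCommGroup E] [Module ℝ E] [TopologicalSpace E]
    [ContinuousAdd E] [ContinuousSMul ℝ E] {V : Fin 5 → Set E} (hV : CodeI2IIncidences V)
    (hconv : ∀ i, Convex ℝ (V i)) (hopen : ∀ i, IsOpen (V i)) {p q w : E}
    (hp : p ∈ (V 0 ∩ V 1) \ V 4) (hq : q ∈ (V 0 ∩ V 4) \ V 1) (hw : w ∈ V 1 ∩ V 3) : False := by
  set Ψ : ℝ × ℝ → E := fun z => p + (z.1 • (q - p) + z.2 • (w - p))
  have hΨ : Continuous Ψ := by fun_prop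
  have hconvΨ : ∀ S, Convex ℝ S → Convex ℝ (Ψ ⁻¹' S) := fun S hS =>
    (hS.translate_preimage_right p).linear_preimage
      ((LinearMap.fst ℝ ℝ ℝ).smulRight (q - p) + (LinearMap.snd ℝ ℝ ℝ).smulRight (w - p))
  exact (hV.preimage Ψ).false_of_isOpen_plane (fun i => hconvΨ _ (hconv i))
    (fun i => (hopen i).preimage hΨ) (by simpa [Ψ] using hp) (by simpa [Ψ] using hq)
    (by simpa [Ψ] using hw)

end CodeI2IIncidences

lemma exists_witnesses_of_codeOf_eq_codeI2I {d : ℕ} {U : Fin 5 → Set (Euc d)}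
    (hU : codeOf U = codeI2I) : ∃ p q w : Euc d,
      p ∈ (U 0 ∩ U 1) \ U 4 ∧ q ∈ (U 0 ∩ U 4) \ U 1 ∧ w ∈ (U 1 ∩ U 3 ∩ U 4) \ U 0 := by
  have h := (codeOf_eq_iff.1 hU).2
  obtain ⟨p, hp⟩ := h (a := {0, 1, 2}) (by rw [mem_codeI2I_iff]; decide)
  obtain ⟨q, hq⟩ := h (a := {0, 3, 4}) (by rw [mem_codeI2I_iff]; decide)
  obtain ⟨w, hw⟩ := h (a := {1, 2, 3, 4}) (by rw [mem_codeI2I_iff]; decide)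
  rw [pattern_eq_iff] at hp hq hw
  exact ⟨p, q, w, by simp [hp], by simp [hq], by simp [hw]⟩

theorem not_hasOpenReal_codeI2I (d : ℕ) : ¬ HasOpenReal codeI2I d := by
  rintro ⟨U, hconv, hopen, hcode⟩
  obtain ⟨p, q, w, hp, hq, hw⟩ := exists_witnesses_of_codeOf_eq_codeI2I hcode
  exact (forall_pattern_mem_codeI2I_iff.1 (codeOf_eq_iff.1 hcode).1).false_of_isOpen hconv hopen
    hp hq hw.1.1

theorem not_hasNondegReal_codeI2I (d : ℕ) : ¬ HasNondegReal codeI2I d := by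
  rintro (⟨U, hU, -⟩ | ⟨X, hX, hXint⟩)
  · exact not_hasOpenReal_codeI2I d ⟨U, hU⟩
  · exact not_hasOpenReal_codeI2I d
      ⟨fun i => interior (X i), fun i => (hX.1 i).interior, fun _ => isOpen_interior, hXint⟩

theorem not_hasClosedReal_codeI2I_one : ¬ HasClosedReal codeI2I 1 := by
  rintro ⟨X, hconv, -, hcode⟩
  obtain ⟨p, q, w, hp, hq, hw⟩ := exists_witnesses_of_codeOf_eq_codeI2I hcode
  have hcol : Collinear ℝ {p, q, w} := by
    rw [collinear_iff_finrank_le_one]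
    exact (Submodule.finrank_le _).trans (by simp)
  rcases hcol.mem_or_mem_or_mem_of_convex (hconv 0) (hconv 1) (hconv 4) hp.1 hq.1
    ⟨hw.1.1.1, hw.1.2⟩ with h | h | h
  exacts [hp.2 h, hq.2 h, hw.2 h]

def polygon (L : List (ℝ × ℝ × ℝ)) : Set (Euc 2) :=
  {z | ∀ l ∈ L, l.1 * z 0 + l.2.1 * z 1 ≤ l.2.2}

lemma convex_polygon (L : List (ℝ × ℝ × ℝ)) : Convex ℝ (polygon L) := by
  simp only [polygon, ofPred_forall]
  refine convex_iInter₂ fun l _ => convex_halfSpace_le ⟨fun x y => ?_, fun c x => ?_⟩ _ <;>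
    simp <;> ring

lemma isClosed_polygon (L : List (ℝ × ℝ × ℝ)) : IsClosed (polygon L) := by
  simp only [polygon, ofPred_forall]
  exact isClosed_biInter fun l _ => isClosed_le (by fun_prop) continuous_const

/-- `U 0` is the strip `-1 ≤ y ≤ 0`, `U 2` and `U 3` are the halves `x ≤ 0` and `0 ≤ x` of
`-1 ≤ y`, and `U 1 ⊆ U 2`, `U 4 ⊆ U 3` are mirror images meeting in the ray `x = 0, 1 ≤ y`. -/
def closedRealization : Fin 5 → Set (Euc 2) :=
  ![polygon [(0, 1, 0), (0, -1, 1)],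
    polygon [(-1, 0, 1), (1, 0, 0), (1, -1, -1)],
    polygon [(1, 0, 0), (0, -1, 1)],
    polygon [(-1, 0, 0), (0, -1, 1)],
    polygon [(-1, 0, 0), (1, 0, 1), (-1, -1, -1)]]

lemma closedRealization_incidences : CodeI2IIncidences closedRealization := by
  refine ⟨fun z hz => ?_, fun z hz => ?_, fun z hz => ?_, fun z hz => ?_, fun z hz => ?_,
    disjoint_left.2 fun z h0 h13 => ?_⟩ <;>
    simp [closedRealization, polygon] at * <;> casesm* _ ∧ _
  · exact ⟨by linarith, by linarith⟩
  · exact ⟨by linarith, by linarith⟩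
  · exact ⟨by linarith, by linarith, by linarith⟩
  · exact ⟨by linarith, by linarith, by linarith⟩
  · exact (le_total (z 0) 0).imp (⟨·, by linarith⟩) (⟨·, by linarith⟩)
  · linarith

theorem hasClosedReal_codeI2I_two : HasClosedReal codeI2I 2 := by
  refine ⟨closedRealization, fun i => ?_, fun i => ?_, codeOf_eq_iff.2
    ⟨forall_pattern_mem_codeI2I_iff.2 closedRealization_incidences, ?_⟩⟩
  · fin_cases i <;> exact convex_polygon _
  · fin_cases i <;> exact isClosed_polygon _
  simp only [codeI2I, insert_subset_iff, singleton_subset_iff, mem_range, pattern_eq_iff]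
  refine ⟨⟨!₂[0, 1], ?_⟩, ⟨!₂[-1, 0], ?_⟩, ⟨!₂[0, 0], ?_⟩, ⟨!₂[1, 0], ?_⟩, ⟨!₂[-1, -1], ?_⟩,
    ⟨!₂[1, -1], ?_⟩, ⟨!₂[-1, 1], ?_⟩, ⟨!₂[0, 1 / 2], ?_⟩, ⟨!₂[1, 1], ?_⟩, ⟨!₂[-2, 1], ?_⟩,
    ⟨!₂[2, 1], ?_⟩, ⟨!₂[0, -2], ?_⟩⟩ <;>
    simp only [Fin.forall_fin_succ, IsEmpty.forall_iff, and_true, closedRealization, polygon,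
      List.forall_mem_cons, mem_ofPred_eq, Matrix.cons_val_zero, Matrix.cons_val_one,
      Matrix.cons_val_succ] <;>
    norm_num [Fin.ext_iff]

/-- `C_{(∞,2,∞)}` has embedding dimension vector `(∞, 2, ∞)`. -/
theorem codeI2I_embedding_dimensions :
    (∀ d : ℕ, ¬ HasOpenReal codeI2I d) ∧
    (∀ d : ℕ, ¬ HasNondegReal codeI2I d) ∧
    HasClosedReal codeI2I 2 ∧
    ¬ HasClosedReal codeI2I 1 :=
  ⟨not_hasOpenReal_codeI2I, not_hasNondegReal_codeI2I, hasClosedReal_codeI2I_two,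
    not_hasClosedReal_codeI2I_one⟩

end
end

section
/- The code C_{(2,∞,∞)} = {{1,2,3}, {1,2,6}, {1,5,6}, {2,3,4}, {3,4,5}, {4,5,6}, {1,2}, {1,6}, {2,3}, {3,4}, {4,5}, {5,6}, ∅} on [6] has embedding dimension vector (2, ∞, ∞): it has an open convex realization in ℝ^2 but no open convex realization in ℝ^1, and it has no closed convex realization in ℝ^d for any d (hence also no non-degenerate convex realization in any dimension). -/
open Set

noncomputable section

/-- The code `C_{(2,∞,∞)}` on `[6]` (indices shifted to `Fin 6`):
`{123, 126, 156, 234, 345, 456, 12, 16, 23, 34, 45, 56, ∅}`. -/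
def code2II : Set (Finset (Fin 6)) :=
  {{0, 1, 2}, {0, 1, 5}, {0, 4, 5}, {1, 2, 3}, {2, 3, 4}, {3, 4, 5}, {0, 1}, {0, 5},
    {1, 2}, {2, 3}, {3, 4}, {4, 5}, (∅ : Finset (Fin 6))}

/-!
In a realization, the points of the cell `U i ∩ U (i + 2)` carry exactly the codeword
`{i, i + 1, i + 2}`, so the six cells are disjoint and nonempty. A segment from cell `i` to cell
`i + 2` lies in `U (i + 2)`, hence in `U (i + 1) ∪ U (i + 3)`; when the sets are all open or all
closed, connectedness of the segment gives a point of both, i.e. of cell `i + 1`.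

Such a cyclic blocking pattern is impossible for closed cells in a strictly convex space: on a
hexagon of minimal perimeter with one vertex in each cell, every vertex lies between its two
neighbours, and going once round the cycle collapses the hexagon. It is also impossible for convex
cells on the line, since the leftmost cell would have to lie between its two neighbours.

In the plane the open half-planes with inner normals `(1,0), (1,1), (0,1), (-1,0), (-1,-1), (0,-1)`
realize the code: these normals go once round the origin, and a point `p ≠ 0` lies in the
half-planes whose normals make an acute angle with `p`, three consecutive ones, or two when `p`
is on one of the lines `x = 0`, `y = 0`, `x + y = 0`.
-/

open Function

theorem eq_triple_of_mem_code2II {σ : Finset (Fin 6)} (hσ : σ ∈ code2II) {i : Fin 6}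
    (hi : i ∈ σ) (hi2 : i + 2 ∈ σ) : σ = {i, i + 1, i + 2} := by
  simp only [code2II, Set.mem_insert_iff, Set.mem_singleton_iff] at hσ
  revert i
  rcases hσ with rfl | rfl | rfl | rfl | rfl | rfl | rfl | rfl | rfl | rfl | rfl | rfl | rfl <;>
    decide

theorem mem_or_mem_of_add_one_mem {σ : Finset (Fin 6)} (hσ : σ ∈ code2II) {i : Fin 6}
    (hi : i + 1 ∈ σ) : i ∈ σ ∨ i + 2 ∈ σ := by
  simp only [code2II, Set.mem_insert_iff, Set.mem_singleton_iff] at hσ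
  revert i
  rcases hσ with rfl | rfl | rfl | rfl | rfl | rfl | rfl | rfl | rfl | rfl | rfl | rfl | rfl <;>
    decide

theorem triple_mem_code2II (i : Fin 6) : {i, i + 1, i + 2} ∈ code2II := by
  simp only [code2II, Set.mem_insert_iff, Set.mem_singleton_iff]
  revert i
  decide

theorem triple_injective : Injective fun i : Fin 6 => ({i, i + 1, i + 2} : Finset (Fin 6)) := by
  decide

/-- `codeOf` for families of sets in an arbitrary type, so that `ℝ¹` can be traded for `ℝ`. -/
def codeOn {E : Type*} {n : ℕ} (U : Fin n → Set E) : Set (Finset (Fin n)) :=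
  {σ | ∃ p : E, ∀ i, p ∈ U i ↔ i ∈ σ}

theorem codeOn_preimage {F E : Type*} {n : ℕ} {f : F → E} (hf : Surjective f)
    (U : Fin n → Set E) : codeOn (fun i => f ⁻¹' U i) = codeOn U := by
  ext σ
  constructor
  · rintro ⟨p, hp⟩
    exact ⟨f p, hp⟩
  · rintro ⟨q, hq⟩
    obtain ⟨p, rfl⟩ := hf q
    exact ⟨p, hq⟩

theorem exists_mem_codeOn {E : Type*} {n : ℕ} (U : Fin n → Set E) (p : E) :
    ∃ σ ∈ codeOn U, ∀ i, p ∈ U i ↔ i ∈ σ := by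
  classical
  exact ⟨Finset.univ.filter (p ∈ U ·), ⟨p, by simp⟩, by simp⟩

theorem HasNondegReal.hasClosedReal {n d : ℕ} {C : Set (Finset (Fin n))}
    (h : HasNondegReal C d) : HasClosedReal C d := by
  rcases h with ⟨U, ⟨hconv, -, -⟩, hcode⟩ | ⟨X, hX, -⟩
  · exact ⟨fun i => closure (U i), fun i => (hconv i).closure, fun i => isClosed_closure, hcode⟩
  · exact ⟨X, hX⟩

section Cells

variable {E : Type*} {U : Fin 6 → Set E}

theorem mem_iff_of_mem_inter_add_two (hU : codeOn U = code2II) {i : Fin 6} {p : E}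
    (hp : p ∈ U i ∩ U (i + 2)) (j : Fin 6) :
    p ∈ U j ↔ j ∈ ({i, i + 1, i + 2} : Finset (Fin 6)) := by
  obtain ⟨σ, hσ, hpσ⟩ := exists_mem_codeOn U p
  rw [hU] at hσ
  rw [hpσ, eq_triple_of_mem_code2II hσ ((hpσ i).1 hp.1) ((hpσ _).1 hp.2)]

theorem inter_add_two_nonempty (hU : codeOn U = code2II) (i : Fin 6) :
    (U i ∩ U (i + 2)).Nonempty := by
  obtain ⟨p, hp⟩ : {i, i + 1, i + 2} ∈ codeOn U := hU ▸ triple_mem_code2II i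
  exact ⟨p, (hp i).2 (by simp), (hp _).2 (by simp)⟩

theorem pairwise_disjoint_inter_add_two (hU : codeOn U = code2II) :
    Pairwise (Disjoint on fun i => U i ∩ U (i + 2)) := by
  refine fun i j hij => Set.disjoint_left.2 fun p hpi hpj => hij (triple_injective ?_)
  exact Finset.ext fun k =>
    (mem_iff_of_mem_inter_add_two hU hpi k).symm.trans (mem_iff_of_mem_inter_add_two hU hpj k)

end Cells

structure IsBlockingCycle {E : Type*} [AddCommGroup E] [Module ℝ E] (W : Fin 6 → Set E) :
    Prop where
  nonempty : ∀ i, (W i).Nonempty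
  pairwise_disjoint : Pairwise (Disjoint on W)
  exists_mem_segment : ∀ i, ∀ u ∈ W i, ∀ v ∈ W (i + 2), ∃ m ∈ segment ℝ u v, m ∈ W (i + 1)

theorem isBlockingCycle_inter_add_two {E : Type*} [AddCommGroup E] [Module ℝ E]
    [TopologicalSpace E] [IsTopologicalAddGroup E] [ContinuousSMul ℝ E] {U : Fin 6 → Set E}
    (hU : codeOn U = code2II) (hconv : ∀ i, Convex ℝ (U i))
    (htop : (∀ i, IsOpen (U i)) ∨ ∀ i, IsClosed (U i)) :
    IsBlockingCycle fun i => U i ∩ U (i + 2) where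
  nonempty := inter_add_two_nonempty hU
  pairwise_disjoint := pairwise_disjoint_inter_add_two hU
  exists_mem_segment i u hu v hv := by
    have h11 : i + 1 + 1 = i + 2 := by rw [add_assoc]; rfl
    have h12 : i + 1 + 2 = i + 2 + 1 := by rw [add_assoc, add_assoc]; rfl
    have hseg : segment ℝ u v ⊆ U (i + 1) ∪ U (i + 1 + 2) := by
      intro m hm
      obtain ⟨σ, hσ, hmσ⟩ := exists_mem_codeOn U m
      rw [hU] at hσ
      have h2 : i + 1 + 1 ∈ σ := by
        rw [h11, ← hmσ]
        exact (hconv _).segment_subset hu.2 hv.1 hm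
      simpa only [Set.mem_union, ← hmσ] using mem_or_mem_of_add_one_mem hσ h2
    have hu1 : u ∈ U (i + 1) := (mem_iff_of_mem_inter_add_two hU hu _).2 (by simp)
    have hv3 : v ∈ U (i + 1 + 2) := (mem_iff_of_mem_inter_add_two hU hv _).2 (by simp [h12])
    have hpre := (convex_segment u v).isPreconnected
    have hu' : (segment ℝ u v ∩ U (i + 1)).Nonempty := ⟨u, left_mem_segment ℝ u v, hu1⟩
    have hv' : (segment ℝ u v ∩ U (i + 1 + 2)).Nonempty := ⟨v, right_mem_segment ℝ u v, hv3⟩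
    obtain ⟨m, hm, hm'⟩ := htop.elim
      (fun hopen => hpre _ _ (hopen _) (hopen _) hseg hu' hv')
      (fun hclosed => isPreconnected_closed_iff.1 hpre _ _ (hclosed _) (hclosed _) hseg hu' hv')
    exact ⟨m, hm, hm'⟩

theorem not_isBlockingCycle_of_convex {W : Fin 6 → Set ℝ} (hconv : ∀ i, Convex ℝ (W i)) :
    ¬ IsBlockingCycle W := by
  intro hW
  choose y hy using hW.nonempty
  obtain ⟨k, hk⟩ := Finite.exists_min y
  obtain ⟨m, hm, hmW⟩ := hW.exists_mem_segment (k - 1) _ (hy (k - 1)) _ (hy (k - 1 + 2))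
  rw [sub_add_cancel] at hmW
  have hne : ∀ j : Fin 6, j - 1 ≠ j ∧ j - 1 + 2 ≠ j := by decide
  -- `y k` is leftmost, so a neighbour's point left of `m` lies in `[y k, m] ⊆ W k`.
  have hleft : ∀ j ≠ k, ¬ y j ≤ m := fun j hjk hjm => Set.disjoint_left.1
    (hW.pairwise_disjoint hjk) (hy j) ((hconv k).segment_subset (hy k) hmW
      (by rw [segment_eq_uIcc]; exact Set.mem_uIcc_of_le (hk j) hjm))
  rw [segment_eq_uIcc] at hm
  rcases inf_le_iff.1 hm.1 with h | h
  exacts [hleft _ (hne k).1 h, hleft _ (hne k).2 h]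

theorem not_forall_wbtw {R E : Type*} [Field R] [LinearOrder R] [IsStrictOrderedRing R]
    [AddCommGroup E] [Module R E] (y : Fin 6 → E) (hy : ∀ i, y i ≠ y (i + 1)) :
    ¬ ∀ i, Wbtw R (y i) (y (i + 1)) (y (i + 2)) := by
  intro h
  have h3 : Wbtw R (y 0) (y 2) (y 3) := (h 0).trans_expand_right (h 1) (hy 1)
  have h4 : Wbtw R (y 0) (y 3) (y 4) := h3.trans_expand_right (h 2) (hy 2)
  have h5 : Wbtw R (y 0) (y 4) (y 5) := h4.trans_expand_right (h 3) (hy 3)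
  have h0 : Wbtw R (y 0) (y 5) (y 0) := h5.trans_expand_right (h 4) (hy 4)
  exact hy 5 ((wbtw_self_iff R).1 h0)

theorem sum_dist_update_add_one {E : Type*} [PseudoMetricSpace E] (y : Fin 6 → E) (i : Fin 6)
    (m : E) :
    ∑ j, dist (update y (i + 1) m j) (update y (i + 1) m (j + 1)) + dist (y i) (y (i + 1)) +
        dist (y (i + 1)) (y (i + 2)) =
      ∑ j, dist (y j) (y (j + 1)) + dist (y i) m + dist m (y (i + 2)) := by
  fin_cases i <;> simp [Fin.sum_univ_six, update] <;> ring

section Closed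

variable {E : Type*} [NormedAddCommGroup E] [NormedSpace ℝ E] [StrictConvexSpace ℝ E]

theorem IsBlockingCycle.exists_forall_wbtw {W : Fin 6 → Set E} (hW : IsBlockingCycle W)
    (hcl : ∀ i, IsClosed (W i)) :
    ∃ y : Fin 6 → E, (∀ i, y i ∈ W i) ∧ ∀ i, Wbtw ℝ (y i) (y (i + 1)) (y (i + 2)) := by
  choose p hp using hW.nonempty
  -- Restricting the vertices to the hull `K` of one point per cell makes the domain compact,
  -- and `K` contains the blocking points used to shorten a hexagon.
  set K := convexHull ℝ (Set.range p)
  set S := Set.univ.pi fun j => K ∩ W j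
  have hS : IsCompact S := isCompact_univ_pi fun j =>
    ((Set.finite_range p).isCompact_convexHull (𝕜 := ℝ)).inter_right (hcl j)
  have hpS : p ∈ S := fun j _ => ⟨subset_convexHull ℝ _ (Set.mem_range_self j), hp j⟩
  have hcont : Continuous fun y : Fin 6 → E => ∑ j, dist (y j) (y (j + 1)) := by fun_prop
  obtain ⟨y, hy, hmin⟩ := hS.exists_isMinOn ⟨p, hpS⟩ hcont.continuousOn
  refine ⟨y, fun i => (hy i trivial).2, fun i => ?_⟩
  by_contra hnot
  obtain ⟨m, hm, hmW⟩ := hW.exists_mem_segment i _ (hy i trivial).2 _ (hy (i + 2) trivial).2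
  have hmK : m ∈ K :=
    (convex_convexHull ℝ _).segment_subset (hy i trivial).1 (hy (i + 2) trivial).1 hm
  have hupdate : update y (i + 1) m ∈ S :=
    (Set.update_mem_pi_iff_of_mem hy).2 fun _ => ⟨hmK, hmW⟩
  have hshort : dist (y i) m + dist m (y (i + 2)) <
      dist (y i) (y (i + 1)) + dist (y (i + 1)) (y (i + 2)) := by
    rw [dist_add_dist_of_mem_segment hm]
    exact (dist_triangle _ _ _).lt_of_ne fun h => hnot (dist_add_dist_eq_iff.1 h.symm)
  linarith [isMinOn_iff.1 hmin _ hupdate, sum_dist_update_add_one y i m]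

theorem not_isBlockingCycle_of_isClosed {W : Fin 6 → Set E} (hcl : ∀ i, IsClosed (W i)) :
    ¬ IsBlockingCycle W := by
  intro hW
  obtain ⟨y, hy, hwbtw⟩ := hW.exists_forall_wbtw hcl
  refine not_forall_wbtw y (fun i h => ?_) hwbtw
  have hne : ∀ i : Fin 6, i ≠ i + 1 := by decide
  exact Set.disjoint_left.1 (hW.pairwise_disjoint (hne i)) (hy i) (h ▸ hy (i + 1))

end Closed

theorem sign_add_eq_of_sign_eq {α : Type*} [Ring α] [LinearOrder α] [IsStrictOrderedRing α]
    {a b : α} (h : SignType.sign a = SignType.sign b) :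
    SignType.sign (a + b) = SignType.sign a := by
  rcases lt_trichotomy a 0 with ha | rfl | ha
  · rw [sign_neg ha] at h ⊢
    exact sign_neg (add_neg ha (sign_eq_neg_one_iff.1 h.symm))
  · rw [sign_zero, eq_comm, sign_eq_zero_iff] at h
    simp [h]
  · rw [sign_pos ha] at h ⊢
    exact sign_pos (add_pos ha (sign_eq_one_iff.1 h.symm))

def signPattern (r s t : SignType) : Finset (Fin 6) :=
  Finset.univ.filter fun i => ![r, s, t, -r, -s, -t] i = 1

-- The hypotheses are the constraints on the signs `r, s, t` of `a, a + b, b`.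
theorem signPattern_mem_code2II {r s t : SignType} (hr : r = 0 → s = t) (ht : t = 0 → s = r)
    (hrt : r = t → s = r) : signPattern r s t ∈ code2II := by
  simp only [code2II, Set.mem_insert_iff, Set.mem_singleton_iff]
  revert r s t
  decide

theorem exists_signPattern_eq {σ : Finset (Fin 6)} (hσ : σ ∈ code2II) :
    ∃ a b : ℝ, signPattern (SignType.sign a) (SignType.sign (a + b)) (SignType.sign b) = σ := by
  simp only [code2II, Set.mem_insert_iff, Set.mem_singleton_iff] at hσ
  rcases hσ with rfl | rfl | rfl | rfl | rfl | rfl | rfl | rfl | rfl | rfl | rfl | rfl | rfl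
  exacts [⟨1, 1, by norm_num; decide⟩, ⟨2, -1, by norm_num; decide⟩, ⟨1, -2, by norm_num; decide⟩,
    ⟨-1, 2, by norm_num; decide⟩, ⟨-2, 1, by norm_num; decide⟩, ⟨-1, -1, by norm_num; decide⟩,
    ⟨1, 0, by norm_num; decide⟩, ⟨1, -1, by norm_num; decide⟩, ⟨0, 1, by norm_num; decide⟩,
    ⟨-1, 1, by norm_num; decide⟩, ⟨-1, 0, by norm_num; decide⟩, ⟨0, -1, by norm_num; decide⟩,
    ⟨0, 0, by norm_num; decide⟩]

def hexForm : Fin 6 → StrongDual ℝ (Euc 2) :=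
  ![EuclideanSpace.proj 0, EuclideanSpace.proj 0 + EuclideanSpace.proj 1, EuclideanSpace.proj 1,
    -EuclideanSpace.proj 0, -(EuclideanSpace.proj 0 + EuclideanSpace.proj 1),
    -EuclideanSpace.proj 1]

def hexHalfPlane (i : Fin 6) : Set (Euc 2) := {p | 0 < hexForm i p}

theorem mem_hexHalfPlane_iff {p : Euc 2} {i : Fin 6} :
    p ∈ hexHalfPlane i ↔
      i ∈ signPattern (SignType.sign (p 0)) (SignType.sign (p 0 + p 1)) (SignType.sign (p 1)) := by
  change 0 < hexForm i p ↔ _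
  rw [← sign_eq_one_iff, signPattern, Finset.mem_filter]
  fin_cases i <;> simp [hexForm, Left.sign_neg, -neg_add_rev]

theorem codeOf_hexHalfPlane : codeOf hexHalfPlane = code2II := by
  ext σ
  constructor
  · rintro ⟨p, hp⟩
    have hσ : σ = signPattern (SignType.sign (p 0)) (SignType.sign (p 0 + p 1))
        (SignType.sign (p 1)) := by
      ext i
      rw [← hp, mem_hexHalfPlane_iff]
    rw [hσ]
    refine signPattern_mem_code2II (fun h => ?_) (fun h => ?_) sign_add_eq_of_sign_eq
    · rw [sign_eq_zero_iff.1 h, zero_add]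
    · rw [sign_eq_zero_iff.1 h, add_zero]
  · intro hσ
    obtain ⟨a, b, rfl⟩ := exists_signPattern_eq hσ
    exact ⟨!₂[a, b], fun i => mem_hexHalfPlane_iff⟩

theorem hasOpenReal_code2II_two : HasOpenReal code2II 2 :=
  ⟨hexHalfPlane, fun i => convex_halfSpace_gt (hexForm i).toLinearMap.isLinear 0,
    fun i => isOpen_lt continuous_const (hexForm i).continuous, codeOf_hexHalfPlane⟩

theorem not_hasOpenReal_code2II_one : ¬ HasOpenReal code2II 1 := by
  rintro ⟨U, hconv, hopen, hcode⟩
  let e : ℝ ≃L[ℝ] Euc 1 :=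
    (ContinuousLinearEquiv.funUnique (Fin 1) ℝ ℝ).symm.trans (EuclideanSpace.equiv (Fin 1) ℝ).symm
  have hV : ∀ i, Convex ℝ (e ⁻¹' U i) := fun i => (hconv i).linear_preimage e.toLinearMap
  exact not_isBlockingCycle_of_convex (fun i => (hV i).inter (hV (i + 2)))
    (isBlockingCycle_inter_add_two ((codeOn_preimage e.surjective U).trans hcode) hV
      (Or.inl fun i => (hopen i).preimage e.continuous))

theorem not_hasClosedReal_code2II (d : ℕ) : ¬ HasClosedReal code2II d := by
  rintro ⟨X, hconv, hclosed, hcode⟩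
  exact not_isBlockingCycle_of_isClosed (fun i => (hclosed i).inter (hclosed (i + 2)))
    (isBlockingCycle_inter_add_two hcode hconv (Or.inr hclosed))

/-- `C_{(2,∞,∞)}` has embedding dimension vector `(2, ∞, ∞)`. -/
theorem code2II_embedding_dimensions :
    HasOpenReal code2II 2 ∧
    ¬ HasOpenReal code2II 1 ∧
    (∀ d : ℕ, ¬ HasClosedReal code2II d) ∧
    (∀ d : ℕ, ¬ HasNondegReal code2II d) :=
  ⟨hasOpenReal_code2II_two, not_hasOpenReal_code2II_one, not_hasClosedReal_code2II,
    fun d h => not_hasClosedReal_code2II d h.hasClosedReal⟩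

end
end
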